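/- arXiv:1701.08335 — 4 statements merged into one kernel-verified Lean document; each statement's English description precedes it below -/
import Mathlib

section
/- If g(K_a, K_b) < (a-1)(b-1) for some a, b, then there exists a constant β < 1 such that g(n) ≤ β n² for all n. -/
open Finset

/-- Edge set of the complete bipartite graph with parts `A` and `B`. -/
def bicliqueEdges {V : Type*} (A B : Finset V) : Set (Sym2 V) :=
  {e | ∃ a ∈ A, ∃ b ∈ B, e = s(a, b)}

/-- `f_2(G)`: minimum number of complete bipartite subgraphs needed to partition
the edge set of the graph `G`. -/
noncomputable def f2 {V : Type*} (G : SimpleGraph V) : ℕ :=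
  sInf {m | ∃ A B : Fin m → Finset V,
    (∀ k, Disjoint (A k) (B k)) ∧
    (∀ k, bicliqueEdges (A k) (B k) ⊆ G.edgeSet) ∧
    ∀ e ∈ G.edgeSet, ∃! k, e ∈ bicliqueEdges (A k) (B k)}

/-- Edge set of the complete `r`-partite `r`-uniform hypergraph with parts `P`. -/
def crossEdges {V : Type*} [DecidableEq V] {r : ℕ} (P : Fin r → Finset V) : Set (Finset V) :=
  {e | ∃ f : Fin r → V, (∀ i, f i ∈ P i) ∧ e = Finset.image f Finset.univ}

/-- `f_r(n)`: minimum number of complete `r`-partite `r`-uniform hypergraphs needed to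
partition the edge set of the complete `r`-uniform hypergraph on `n` vertices. -/
noncomputable def fr (r n : ℕ) : ℕ :=
  sInf {m | ∃ P : Fin m → Fin r → Finset (Fin n),
    (∀ k, Pairwise (Function.onFun Disjoint (P k))) ∧
    ∀ e : Finset (Fin n), e.card = r → ∃! k, e ∈ crossEdges (P k)}

/-- `g(G,H)`: minimum number of blocks (products of edge sets of complete
bipartite subgraphs of `G` and `H` respectively) needed to partition `E(G) × E(H)`. -/
noncomputable def gGH {V W : Type*} (G : SimpleGraph V) (H : SimpleGraph W) : ℕ :=
  sInf {m | ∃ A B : Fin m → Finset V, ∃ C D : Fin m → Finset W,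
    (∀ k, Disjoint (A k) (B k)) ∧ (∀ k, Disjoint (C k) (D k)) ∧
    (∀ k, bicliqueEdges (A k) (B k) ⊆ G.edgeSet) ∧
    (∀ k, bicliqueEdges (C k) (D k) ⊆ H.edgeSet) ∧
    ∀ p : Sym2 V × Sym2 W, p.1 ∈ G.edgeSet → p.2 ∈ H.edgeSet →
      ∃! k, p.1 ∈ bicliqueEdges (A k) (B k) ∧ p.2 ∈ bicliqueEdges (C k) (D k)}

/-- `g(n) = g(K_n, K_n)`. -/
noncomputable def gn (n : ℕ) : ℕ :=
  gGH (SimpleGraph.completeGraph (Fin n)) (SimpleGraph.completeGraph (Fin n))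


namespace Stmt6

open SimpleGraph

variable {V W : Type*}

def gset (G : SimpleGraph V) (H : SimpleGraph W) : Set ℕ :=
  {m | ∃ A B : Fin m → Finset V, ∃ C D : Fin m → Finset W,
    (∀ k, Disjoint (A k) (B k)) ∧ (∀ k, Disjoint (C k) (D k)) ∧
    (∀ k, bicliqueEdges (A k) (B k) ⊆ G.edgeSet) ∧
    (∀ k, bicliqueEdges (C k) (D k) ⊆ H.edgeSet) ∧
    ∀ p : Sym2 V × Sym2 W, p.1 ∈ G.edgeSet → p.2 ∈ H.edgeSet →
      ∃! k, p.1 ∈ bicliqueEdges (A k) (B k) ∧ p.2 ∈ bicliqueEdges (C k) (D k)}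

lemma gGH_eq (G : SimpleGraph V) (H : SimpleGraph W) : gGH G H = sInf (gset G H) := rfl

lemma mem_biclique_pair {A B : Finset V} {x y : V} :
    s(x, y) ∈ bicliqueEdges A B ↔ (x ∈ A ∧ y ∈ B) ∨ (y ∈ A ∧ x ∈ B) := by
  constructor
  · rintro ⟨a, ha, c, hc, he⟩
    rw [Sym2.eq_iff] at he
    rcases he with ⟨rfl, rfl⟩ | ⟨rfl, rfl⟩
    · exact Or.inl ⟨ha, hc⟩
    · exact Or.inr ⟨ha, hc⟩
  · rintro (⟨hx, hy⟩ | ⟨hy, hx⟩)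
    · exact ⟨x, hx, y, hy, rfl⟩
    · exact ⟨y, hy, x, hx, Sym2.eq_swap⟩

lemma biclique_subset_top {A B : Finset V} (h : Disjoint A B) :
    bicliqueEdges A B ⊆ (completeGraph V).edgeSet := by
  rintro e ⟨x, hx, y, hy, rfl⟩
  rw [SimpleGraph.mem_edgeSet]
  simp only [completeGraph, SimpleGraph.top_adj]
  rintro rfl
  exact Finset.disjoint_left.mp h hx hy

lemma existsUnique_prod {α β : Type*} {P : α → Prop} {Q : β → Prop}
    (hP : ∃! i, P i) (hQ : ∃! j, Q j) : ∃! k : α × β, P k.1 ∧ Q k.2 := by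
  obtain ⟨i, hi, hiu⟩ := hP
  obtain ⟨j, hj, hju⟩ := hQ
  exact ⟨(i, j), ⟨hi, hj⟩, fun k hk => Prod.ext (hiu k.1 hk.1) (hju k.2 hk.2)⟩

lemma mem_gset_card (G : SimpleGraph V) (H : SimpleGraph W) (I : Type) [Fintype I]
    (A B : I → Finset V) (C D : I → Finset W)
    (h1 : ∀ k, Disjoint (A k) (B k)) (h2 : ∀ k, Disjoint (C k) (D k))
    (h3 : ∀ k, bicliqueEdges (A k) (B k) ⊆ G.edgeSet)
    (h4 : ∀ k, bicliqueEdges (C k) (D k) ⊆ H.edgeSet)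
    (h5 : ∀ p : Sym2 V × Sym2 W, p.1 ∈ G.edgeSet → p.2 ∈ H.edgeSet →
      ∃! k, p.1 ∈ bicliqueEdges (A k) (B k) ∧ p.2 ∈ bicliqueEdges (C k) (D k)) :
    Fintype.card I ∈ gset G H := by
  classical
  set e := (Fintype.equivFin I).symm
  refine ⟨A ∘ e, B ∘ e, C ∘ e, D ∘ e, fun k => h1 _, fun k => h2 _, fun k => h3 _,
    fun k => h4 _, fun p hp1 hp2 => ?_⟩
  obtain ⟨k, hk, hku⟩ := h5 p hp1 hp2
  refine ⟨e.symm k, ?_, fun y hy => ?_⟩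
  · simpa using hk
  · have := hku (e y) hy
    simp [← this]

end Stmt6

namespace Stmt6
open SimpleGraph

lemma biclique_preimage {V W : Type*} [Fintype V] [DecidableEq W] (φ : V → W) (A B : Finset W)
    (x y : V) :
    s(x, y) ∈ bicliqueEdges (univ.filter (fun v => φ v ∈ A)) (univ.filter (fun v => φ v ∈ B)) ↔
      s(φ x, φ y) ∈ bicliqueEdges A B := by
  simp only [mem_biclique_pair, Finset.mem_filter, Finset.mem_univ, true_and]

lemma star_eu' {s : ℕ} {x y : Fin s} (hxy : (x : ℕ) < (y : ℕ)) :
    ∃! i : Fin (s - 1), s(x, y) ∈ bicliqueEdges {Fin.castLE (Nat.sub_le s 1) i}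
      (univ.filter fun v : Fin s => (i : ℕ) < (v : ℕ)) := by
  have hy := y.isLt
  refine ⟨⟨(x : ℕ), by omega⟩, ?_, ?_⟩
  · refine mem_biclique_pair.mpr (Or.inl ⟨Finset.mem_singleton.mpr ?_, ?_⟩)
    · apply Fin.ext; simp
    · simp only [Finset.mem_filter, Finset.mem_univ, true_and]; exact hxy
  · intro j hj
    rcases mem_biclique_pair.mp hj with ⟨hx1, hy1⟩ | ⟨hy1, hx1⟩
    · rw [Finset.mem_singleton] at hx1
      apply Fin.ext
      have : (x : ℕ) = (j : ℕ) := by rw [hx1]; simp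
      simp [← this]
    · rw [Finset.mem_singleton] at hy1
      simp only [Finset.mem_filter, Finset.mem_univ, true_and] at hx1
      have : (y : ℕ) = (j : ℕ) := by rw [hy1]; simp
      omega

lemma star_eu {s : ℕ} {x y : Fin s} (hxy : x ≠ y) :
    ∃! i : Fin (s - 1), s(x, y) ∈ bicliqueEdges {Fin.castLE (Nat.sub_le s 1) i}
      (univ.filter fun v : Fin s => (i : ℕ) < (v : ℕ)) := by
  rcases Nat.lt_or_ge (x : ℕ) (y : ℕ) with h | h
  · exact star_eu' h
  · have h' : (y : ℕ) < (x : ℕ) := by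
      rcases Nat.eq_or_lt_of_le h with h1 | h1
      · exact absurd (Fin.ext h1.symm) hxy
      · exact h1
    have := star_eu' h'
    simpa only [Sym2.eq_swap] using this

lemma trivial_mem (s t : ℕ) :
    (s - 1) * (t - 1) ∈ gset (completeGraph (Fin s)) (completeGraph (Fin t)) := by
  classical
  rw [show (s - 1) * (t - 1) = Fintype.card (Fin (s - 1) × Fin (t - 1)) by simp]
  refine mem_gset_card _ _ _
    (fun k => {Fin.castLE (Nat.sub_le s 1) k.1})
    (fun k => univ.filter fun v : Fin s => (k.1 : ℕ) < (v : ℕ))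
    (fun k => {Fin.castLE (Nat.sub_le t 1) k.2})
    (fun k => univ.filter fun v : Fin t => (k.2 : ℕ) < (v : ℕ))
    ?_ ?_ ?_ ?_ ?_
  · intro k
    rw [Finset.disjoint_left]
    intro v hv hv2
    rw [Finset.mem_singleton] at hv
    simp only [Finset.mem_filter, Finset.mem_univ, true_and, hv] at hv2
    simp at hv2
  · intro k
    rw [Finset.disjoint_left]
    intro v hv hv2
    rw [Finset.mem_singleton] at hv
    simp only [Finset.mem_filter, Finset.mem_univ, true_and, hv] at hv2
    simp at hv2
  · intro k
    apply biclique_subset_top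
    rw [Finset.disjoint_left]
    intro v hv hv2
    rw [Finset.mem_singleton] at hv
    simp only [Finset.mem_filter, Finset.mem_univ, true_and, hv] at hv2
    simp at hv2
  · intro k
    apply biclique_subset_top
    rw [Finset.disjoint_left]
    intro v hv hv2
    rw [Finset.mem_singleton] at hv
    simp only [Finset.mem_filter, Finset.mem_univ, true_and, hv] at hv2
    simp at hv2
  · rintro ⟨e, f⟩ hp1 hp2
    induction e using Sym2.ind with
    | _ x y =>
    induction f using Sym2.ind with
    | _ u w =>
    rw [SimpleGraph.mem_edgeSet] at hp1 hp2
    exact existsUnique_prod (star_eu hp1.ne) (star_eu hp2.ne)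

noncomputable def gg (x y : ℕ) : ℕ := gGH (completeGraph (Fin x)) (completeGraph (Fin y))

lemma gg_mem (s t : ℕ) : gg s t ∈ gset (completeGraph (Fin s)) (completeGraph (Fin t)) :=
  Nat.sInf_mem ⟨_, trivial_mem s t⟩

lemma gg_le_of_mem {s t m : ℕ} (h : m ∈ gset (completeGraph (Fin s)) (completeGraph (Fin t))) :
    gg s t ≤ m := Nat.sInf_le h

lemma gg_le_trivial (s t : ℕ) : gg s t ≤ (s - 1) * (t - 1) := gg_le_of_mem (trivial_mem s t)

lemma gg_swap_le (s t : ℕ) : gg t s ≤ gg s t := by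
  obtain ⟨A, B, C, D, h1, h2, h3, h4, h5⟩ := gg_mem s t
  refine gg_le_of_mem ⟨C, D, A, B, h2, h1, h4, h3, fun p hp1 hp2 => ?_⟩
  obtain ⟨k, hk, hku⟩ := h5 (p.2, p.1) hp2 hp1
  exact ⟨k, ⟨hk.2, hk.1⟩, fun y hy => hku y ⟨hy.2, hy.1⟩⟩

lemma gg_mono {s t s' t' : ℕ} (hs : s ≤ s') (ht : t ≤ t') : gg s t ≤ gg s' t' := by
  classical
  obtain ⟨A, B, C, D, h1, h2, h3, h4, h5⟩ := gg_mem s' t'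
  set φ := Fin.castLE hs
  set ψ := Fin.castLE ht
  refine gg_le_of_mem ⟨fun k => univ.filter (fun v => φ v ∈ A k),
    fun k => univ.filter (fun v => φ v ∈ B k),
    fun k => univ.filter (fun v => ψ v ∈ C k),
    fun k => univ.filter (fun v => ψ v ∈ D k), ?_, ?_, ?_, ?_, ?_⟩
  · intro k
    rw [Finset.disjoint_left]
    intro v hv hv2
    simp only [Finset.mem_filter, Finset.mem_univ, true_and] at hv hv2
    exact Finset.disjoint_left.mp (h1 k) hv hv2
  · intro k
    rw [Finset.disjoint_left]
    intro v hv hv2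
    simp only [Finset.mem_filter, Finset.mem_univ, true_and] at hv hv2
    exact Finset.disjoint_left.mp (h2 k) hv hv2
  · intro k
    apply biclique_subset_top
    rw [Finset.disjoint_left]
    intro v hv hv2
    simp only [Finset.mem_filter, Finset.mem_univ, true_and] at hv hv2
    exact Finset.disjoint_left.mp (h1 k) hv hv2
  · intro k
    apply biclique_subset_top
    rw [Finset.disjoint_left]
    intro v hv hv2
    simp only [Finset.mem_filter, Finset.mem_univ, true_and] at hv hv2
    exact Finset.disjoint_left.mp (h2 k) hv hv2
  · rintro ⟨e, f⟩ hp1 hp2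
    induction e using Sym2.ind with
    | _ x y =>
    induction f using Sym2.ind with
    | _ u w =>
    rw [SimpleGraph.mem_edgeSet] at hp1 hp2
    have hxy : φ x ≠ φ y := fun hc => hp1.ne (Fin.castLE_injective hs hc)
    have huw : ψ u ≠ ψ w := fun hc => hp2.ne (Fin.castLE_injective ht hc)
    obtain ⟨k, hk, hku⟩ := h5 (s(φ x, φ y), s(ψ u, ψ w))
      (by rw [SimpleGraph.mem_edgeSet]; exact hxy)
      (by rw [SimpleGraph.mem_edgeSet]; exact huw)
    refine ⟨k, ?_, ?_⟩
    · exact ⟨(biclique_preimage φ _ _ x y).mpr hk.1, (biclique_preimage ψ _ _ u w).mpr hk.2⟩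
    · intro j hj
      exact hku j ⟨(biclique_preimage φ _ _ x y).mp hj.1, (biclique_preimage ψ _ _ u w).mp hj.2⟩

end Stmt6

namespace Stmt6
open SimpleGraph

def fdiv {a s : ℕ} (v : Fin (a * s)) : Fin a :=
  ⟨v.val / s, Nat.div_lt_of_lt_mul (by rw [Nat.mul_comm s a]; exact v.isLt)⟩

def fmod {a s : ℕ} (v : Fin (a * s)) : Fin s :=
  ⟨v.val % s, by
    rcases Nat.eq_zero_or_pos s with h | h
    · subst h; exact absurd v.isLt (by simp)
    · exact Nat.mod_lt _ h⟩

def fjoin {a s : ℕ} (i : Fin a) (x : Fin s) : Fin (a * s) :=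
  ⟨i.val * s + x.val, by
    have h1 := i.isLt
    have h2 := x.isLt
    calc i.val * s + x.val < i.val * s + s := by omega
      _ = (i.val + 1) * s := by ring
      _ ≤ a * s := Nat.mul_le_mul_right s h1⟩

@[simp] lemma fdiv_fjoin {a s : ℕ} (i : Fin a) (x : Fin s) : fdiv (fjoin i x) = i := by
  have hx := x.isLt
  have hs : 0 < s := by omega
  apply Fin.ext
  show (i.val * s + x.val) / s = i.val
  rw [show i.val * s + x.val = x.val + s * i.val by ring, Nat.add_mul_div_left _ _ hs,
    Nat.div_eq_of_lt hx, Nat.zero_add]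

@[simp] lemma fmod_fjoin {a s : ℕ} (i : Fin a) (x : Fin s) : fmod (fjoin i x) = x := by
  have hx := x.isLt
  apply Fin.ext
  show (i.val * s + x.val) % s = x.val
  rw [show i.val * s + x.val = x.val + s * i.val by ring, Nat.add_mul_mod_self_left,
    Nat.mod_eq_of_lt hx]

@[simp] lemma fjoin_div_mod {a s : ℕ} (v : Fin (a * s)) : fjoin (fdiv v) (fmod v) = v := by
  apply Fin.ext
  show (v.val / s) * s + v.val % s = v.val
  rw [show (v.val / s) * s = s * (v.val / s) by ring]
  exact Nat.div_add_mod _ _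

lemma fin_eq_of {a s : ℕ} {v w : Fin (a * s)} (hd : fdiv v = fdiv w) (hm : fmod v = fmod w) :
    v = w := by
  rw [← fjoin_div_mod v, ← fjoin_div_mod w, hd, hm]

lemma fjoin_injective {a s : ℕ} (i : Fin a) : Function.Injective (fjoin (s := s) i) := by
  intro x y h
  rw [← fmod_fjoin i x, ← fmod_fjoin i y, h]

lemma mem_image_fjoin {a s : ℕ} {i : Fin a} {x : Fin (a * s)} (hx : fdiv x = i)
    (A : Finset (Fin s)) : x ∈ A.image (fjoin i) ↔ fmod x ∈ A := by
  rw [Finset.mem_image]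
  constructor
  · rintro ⟨c, hc, rfl⟩
    simpa using hc
  · intro h
    exact ⟨fmod x, h, by rw [← hx, fjoin_div_mod]⟩

lemma image_biclique {a s : ℕ} {i : Fin a} {x y : Fin (a * s)} (hx : fdiv x = i)
    (hy : fdiv y = i) (A B : Finset (Fin s)) :
    s(x, y) ∈ bicliqueEdges (A.image (fjoin i)) (B.image (fjoin i)) ↔
      s(fmod x, fmod y) ∈ bicliqueEdges A B := by
  rw [mem_biclique_pair, mem_biclique_pair, mem_image_fjoin hx, mem_image_fjoin hy,
    mem_image_fjoin hx, mem_image_fjoin hy]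

lemma fiber_star_eu' {a s : ℕ} {x y : Fin (a * s)} (hd : fdiv x = fdiv y)
    (hlt : ((fmod x : ℕ)) < ((fmod y : ℕ))) :
    ∃! z : Fin a × Fin (s - 1),
      s(x, y) ∈ bicliqueEdges {fjoin z.1 (Fin.castLE (Nat.sub_le s 1) z.2)}
        (univ.filter fun v : Fin (a * s) => fdiv v = z.1 ∧ (z.2 : ℕ) < ((fmod v : ℕ))) := by
  have hys := (fmod y).isLt
  refine ⟨(fdiv x, ⟨(fmod x : ℕ), by omega⟩), ?_, ?_⟩
  · refine mem_biclique_pair.mpr (Or.inl ⟨Finset.mem_singleton.mpr ?_, ?_⟩)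
    · rw [show (Fin.castLE (Nat.sub_le s 1) (⟨(fmod x : ℕ), by omega⟩ : Fin (s - 1))) = fmod x
        from Fin.ext (by simp)]
      rw [fjoin_div_mod]
    · simp only [Finset.mem_filter, Finset.mem_univ, true_and]
      exact ⟨hd.symm, hlt⟩
  · rintro ⟨i0, x0⟩ hj
    rcases mem_biclique_pair.mp hj with ⟨hx1, hy1⟩ | ⟨hy1, hx1⟩
    · rw [Finset.mem_singleton] at hx1
      have hdx : fdiv x = i0 := by rw [hx1]; simp
      have hmx : (fmod x : ℕ) = (x0 : ℕ) := by rw [hx1]; simp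
      refine Prod.ext ?_ ?_
      · exact hdx.symm
      · exact Fin.ext hmx.symm
    · rw [Finset.mem_singleton] at hy1
      simp only [Finset.mem_filter, Finset.mem_univ, true_and] at hx1
      have hmy : (fmod y : ℕ) = (x0 : ℕ) := by rw [hy1]; simp
      omega

lemma fiber_star_eu {a s : ℕ} {x y : Fin (a * s)} (hd : fdiv x = fdiv y) (hxy : x ≠ y) :
    ∃! z : Fin a × Fin (s - 1),
      s(x, y) ∈ bicliqueEdges {fjoin z.1 (Fin.castLE (Nat.sub_le s 1) z.2)}
        (univ.filter fun v : Fin (a * s) => fdiv v = z.1 ∧ (z.2 : ℕ) < ((fmod v : ℕ))) := by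
  have hm : fmod x ≠ fmod y := fun hc => hxy (fin_eq_of hd hc)
  rcases Nat.lt_or_ge ((fmod x : ℕ)) ((fmod y : ℕ)) with h | h
  · exact fiber_star_eu' hd h
  · have h' : ((fmod y : ℕ)) < ((fmod x : ℕ)) := by
      rcases Nat.eq_or_lt_of_le h with h1 | h1
      · exact absurd (Fin.ext h1.symm) hm
      · exact h1
    have := fiber_star_eu' hd.symm h'
    simpa only [Sym2.eq_swap] using this

lemma lift_star_eu' {b t : ℕ} {u w : Fin (b * t)}
    (hlt : ((fdiv u : Fin b) : ℕ) < ((fdiv w : Fin b) : ℕ)) :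
    ∃! z : Fin (b - 1),
      s(u, w) ∈ bicliqueEdges (univ.filter fun v : Fin (b * t) => ((fdiv v : Fin b) : ℕ) = (z : ℕ))
        (univ.filter fun v : Fin (b * t) => (z : ℕ) < ((fdiv v : Fin b) : ℕ)) := by
  have hwb := (fdiv w).isLt
  refine ⟨⟨((fdiv u : Fin b) : ℕ), by omega⟩, ?_, ?_⟩
  · refine mem_biclique_pair.mpr (Or.inl ⟨?_, ?_⟩)
    · exact Finset.mem_filter.mpr ⟨Finset.mem_univ _, rfl⟩
    · exact Finset.mem_filter.mpr ⟨Finset.mem_univ _, hlt⟩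
  · intro j hj
    apply Fin.ext
    show (j : ℕ) = ((fdiv u : Fin b) : ℕ)
    rcases mem_biclique_pair.mp hj with ⟨hx1, hy1⟩ | ⟨hy1, hx1⟩ <;>
      simp only [Finset.mem_filter, Finset.mem_univ, true_and] at hx1 hy1 <;> omega

lemma lift_star_eu {b t : ℕ} {u w : Fin (b * t)} (hd : fdiv u ≠ fdiv w) :
    ∃! z : Fin (b - 1),
      s(u, w) ∈ bicliqueEdges (univ.filter fun v : Fin (b * t) => ((fdiv v : Fin b) : ℕ) = (z : ℕ))
        (univ.filter fun v : Fin (b * t) => (z : ℕ) < ((fdiv v : Fin b) : ℕ)) := by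
  rcases Nat.lt_or_ge ((fdiv u : Fin b) : ℕ) ((fdiv w : Fin b) : ℕ) with h | h
  · exact lift_star_eu' h
  · have h' : ((fdiv w : Fin b) : ℕ) < ((fdiv u : Fin b) : ℕ) := by
      rcases Nat.eq_or_lt_of_le h with h1 | h1
      · exact absurd (Fin.ext h1.symm) hd
      · exact h1
    have := lift_star_eu' h'
    simpa only [Sym2.eq_swap] using this

end Stmt6

namespace Stmt6
open SimpleGraph

lemma shape_cc {a s : ℕ} {x y : Fin (a * s)} {A0 B0 : Finset (Fin a)} (hdisj : Disjoint A0 B0)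
    [DecidablePred (fun v : Fin (a * s) => fdiv v ∈ A0)]
    [DecidablePred (fun v : Fin (a * s) => fdiv v ∈ B0)]
    (h : s(x, y) ∈ bicliqueEdges (univ.filter fun v => fdiv v ∈ A0)
      (univ.filter fun v => fdiv v ∈ B0)) :
    fdiv x ≠ fdiv y := by
  rcases mem_biclique_pair.mp h with ⟨h1, h2⟩ | ⟨h1, h2⟩ <;>
    simp only [Finset.mem_filter, Finset.mem_univ, true_and] at h1 h2 <;> intro hc
  · rw [hc] at h1; exact Finset.disjoint_left.mp hdisj h1 h2
  · rw [hc] at h2; exact Finset.disjoint_left.mp hdisj h1 h2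

lemma shape_single {a s : ℕ} {x y : Fin (a * s)} {i : Fin a} {x0 : Fin s}
    {P : Fin (a * s) → Prop} [DecidablePred P] (hP : ∀ v, P v → fdiv v = i)
    (h : s(x, y) ∈ bicliqueEdges {fjoin i x0} (univ.filter P)) : fdiv x = fdiv y := by
  rcases mem_biclique_pair.mp h with ⟨h1, h2⟩ | ⟨h1, h2⟩ <;>
    rw [Finset.mem_singleton] at h1 <;>
    simp only [Finset.mem_filter, Finset.mem_univ, true_and] at h2
  · rw [h1, fdiv_fjoin, hP y h2]
  · rw [h1, fdiv_fjoin, hP x h2]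

lemma shape_lift {b t : ℕ} {u w : Fin (b * t)} {z : ℕ}
    (h : s(u, w) ∈ bicliqueEdges (univ.filter fun v : Fin (b * t) => ((fdiv v : Fin b) : ℕ) = z)
      (univ.filter fun v : Fin (b * t) => z < ((fdiv v : Fin b) : ℕ))) :
    fdiv u ≠ fdiv w := by
  rcases mem_biclique_pair.mp h with ⟨h1, h2⟩ | ⟨h1, h2⟩ <;>
    simp only [Finset.mem_filter, Finset.mem_univ, true_and] at h1 h2 <;>
    intro hc
  · rw [hc] at h1; omega
  · rw [hc] at h2; omega

lemma shape_image {a s : ℕ} {x y : Fin (a * s)} {i : Fin a} {A B : Finset (Fin s)}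
    (h : s(x, y) ∈ bicliqueEdges (A.image (fjoin i)) (B.image (fjoin i))) :
    fdiv x = i ∧ fdiv y = i := by
  rcases mem_biclique_pair.mp h with ⟨h1, h2⟩ | ⟨h1, h2⟩ <;>
    rw [Finset.mem_image] at h1 h2
  · obtain ⟨c, _, rfl⟩ := h1; obtain ⟨c2, _, rfl⟩ := h2; simp
  · obtain ⟨c, _, rfl⟩ := h1; obtain ⟨c2, _, rfl⟩ := h2; simp

lemma master (a b s t : ℕ) :
    gg (a * s) (b * t) ≤
      gg a b + a * (s - 1) * (b - 1) + (a - 1) * (b * (t - 1)) + a * b * gg s t := by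
  classical
  obtain ⟨A0, B0, C0, D0, p1, p2, p3, p4, p5⟩ := gg_mem a b
  obtain ⟨A2, B2, C2, D2, q1, q2, q3, q4, q5⟩ := gg_mem s t
  set I := (Fin (gg a b) ⊕ (((Fin a × Fin (s - 1)) × Fin (b - 1)) ⊕
    ((Fin (a - 1) × (Fin b × Fin (t - 1))) ⊕ ((Fin a × Fin b) × Fin (gg s t))))) with hI
  set SA : I → Finset (Fin (a * s)) := Sum.elim
    (fun k => univ.filter fun v => fdiv v ∈ A0 k)
    (Sum.elim
      (fun z => {fjoin z.1.1 (Fin.castLE (Nat.sub_le s 1) z.1.2)})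
      (Sum.elim
        (fun z => univ.filter fun v : Fin (a * s) => ((fdiv v : Fin a) : ℕ) = (z.1 : ℕ))
        (fun z => (A2 z.2).image (fjoin z.1.1)))) with hSA
  set SB : I → Finset (Fin (a * s)) := Sum.elim
    (fun k => univ.filter fun v => fdiv v ∈ B0 k)
    (Sum.elim
      (fun z => univ.filter fun v : Fin (a * s) =>
        fdiv v = z.1.1 ∧ (z.1.2 : ℕ) < ((fmod v : ℕ)))
      (Sum.elim
        (fun z => univ.filter fun v : Fin (a * s) => (z.1 : ℕ) < ((fdiv v : Fin a) : ℕ))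
        (fun z => (B2 z.2).image (fjoin z.1.1)))) with hSB
  set SC : I → Finset (Fin (b * t)) := Sum.elim
    (fun k => univ.filter fun v => fdiv v ∈ C0 k)
    (Sum.elim
      (fun z => univ.filter fun v : Fin (b * t) => ((fdiv v : Fin b) : ℕ) = (z.2 : ℕ))
      (Sum.elim
        (fun z => {fjoin z.2.1 (Fin.castLE (Nat.sub_le t 1) z.2.2)})
        (fun z => (C2 z.2).image (fjoin z.1.2)))) with hSC
  set SD : I → Finset (Fin (b * t)) := Sum.elim
    (fun k => univ.filter fun v => fdiv v ∈ D0 k)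
    (Sum.elim
      (fun z => univ.filter fun v : Fin (b * t) => (z.2 : ℕ) < ((fdiv v : Fin b) : ℕ))
      (Sum.elim
        (fun z => univ.filter fun v : Fin (b * t) =>
          fdiv v = z.2.1 ∧ (z.2.2 : ℕ) < ((fmod v : ℕ)))
        (fun z => (D2 z.2).image (fjoin z.1.2)))) with hSD
  have hAB : ∀ k, Disjoint (SA k) (SB k) := by
    rintro (k | (z | (z | z)))
    · simp only [hSA, hSB, Sum.elim_inl]
      rw [Finset.disjoint_left]; intro v hv hv2
      simp only [Finset.mem_filter, Finset.mem_univ, true_and] at hv hv2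
      exact Finset.disjoint_left.mp (p1 k) hv hv2
    · simp only [hSA, hSB, Sum.elim_inr, Sum.elim_inl]
      rw [Finset.disjoint_left]; intro v hv hv2
      rw [Finset.mem_singleton] at hv
      rw [Finset.mem_filter] at hv2
      have h2 : (z.1.2 : ℕ) < ((fmod v : ℕ)) := hv2.2.2
      rw [hv, fmod_fjoin, Fin.coe_castLE] at h2
      omega
    · simp only [hSA, hSB, Sum.elim_inr, Sum.elim_inl]
      rw [Finset.disjoint_left]; intro v hv hv2
      simp only [Finset.mem_filter, Finset.mem_univ, true_and] at hv hv2
      omega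
    · simp only [hSA, hSB, Sum.elim_inr]
      exact (Finset.disjoint_image (fjoin_injective _)).mpr (q1 _)
  have hCD : ∀ k, Disjoint (SC k) (SD k) := by
    rintro (k | (z | (z | z)))
    · simp only [hSC, hSD, Sum.elim_inl]
      rw [Finset.disjoint_left]; intro v hv hv2
      simp only [Finset.mem_filter, Finset.mem_univ, true_and] at hv hv2
      exact Finset.disjoint_left.mp (p2 k) hv hv2
    · simp only [hSC, hSD, Sum.elim_inr, Sum.elim_inl]
      rw [Finset.disjoint_left]; intro v hv hv2
      simp only [Finset.mem_filter, Finset.mem_univ, true_and] at hv hv2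
      omega
    · simp only [hSC, hSD, Sum.elim_inr, Sum.elim_inl]
      rw [Finset.disjoint_left]; intro v hv hv2
      rw [Finset.mem_singleton] at hv
      rw [Finset.mem_filter] at hv2
      have h2 : (z.2.2 : ℕ) < ((fmod v : ℕ)) := hv2.2.2
      rw [hv, fmod_fjoin, Fin.coe_castLE] at h2
      omega
    · simp only [hSC, hSD, Sum.elim_inr]
      exact (Finset.disjoint_image (fjoin_injective _)).mpr (q2 _)
  have h5 : ∀ p : Sym2 (Fin (a * s)) × Sym2 (Fin (b * t)),
      p.1 ∈ (completeGraph (Fin (a * s))).edgeSet →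
      p.2 ∈ (completeGraph (Fin (b * t))).edgeSet →
      ∃! k, p.1 ∈ bicliqueEdges (SA k) (SB k) ∧ p.2 ∈ bicliqueEdges (SC k) (SD k) := by
    rintro ⟨e, f⟩ hp1 hp2
    induction e using Sym2.ind with
    | _ x y =>
    induction f using Sym2.ind with
    | _ u w =>
    rw [SimpleGraph.mem_edgeSet] at hp1 hp2
    have hxy : x ≠ y := hp1.ne
    have huw : u ≠ w := hp2.ne
    by_cases hde : fdiv x = fdiv y <;> by_cases hdf : fdiv u = fdiv w
    · -- same fiber on both sides
      have hmx : fmod x ≠ fmod y := fun hc => hxy (fin_eq_of hde hc)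
      have hmu : fmod u ≠ fmod w := fun hc => huw (fin_eq_of hdf hc)
      obtain ⟨k2, hk2, hk2u⟩ := q5 (s(fmod x, fmod y), s(fmod u, fmod w))
        (by rw [SimpleGraph.mem_edgeSet]; exact hmx)
        (by rw [SimpleGraph.mem_edgeSet]; exact hmu)
      refine ⟨Sum.inr (Sum.inr (Sum.inr ((fdiv x, fdiv u), k2))), ⟨?_, ?_⟩, ?_⟩
      · simp only [hSA, hSB, Sum.elim_inr]
        exact (image_biclique rfl hde.symm _ _).mpr hk2.1
      · simp only [hSC, hSD, Sum.elim_inr]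
        exact (image_biclique rfl hdf.symm _ _).mpr hk2.2
      · rintro (k' | (z | (z | ⟨⟨i', j'⟩, k'⟩))) ⟨hj1, hj2⟩
        · simp only [hSA, hSB, Sum.elim_inl] at hj1
          exact absurd hde (shape_cc (p1 k') hj1)
        · simp only [hSC, hSD, Sum.elim_inr, Sum.elim_inl] at hj2
          exact absurd hdf (shape_lift hj2)
        · simp only [hSA, hSB, Sum.elim_inr, Sum.elim_inl] at hj1
          exact absurd hde (shape_lift hj1)
        · simp only [hSA, hSB, Sum.elim_inr] at hj1
          simp only [hSC, hSD, Sum.elim_inr] at hj2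
          obtain ⟨hxi, hyi⟩ := shape_image hj1
          obtain ⟨huj, hwj⟩ := shape_image hj2
          have h1' := (image_biclique hxi hyi _ _).mp hj1
          have h2' := (image_biclique huj hwj _ _).mp hj2
          have hk := hk2u k' ⟨h1', h2'⟩
          rw [hk, ← hxi, ← huj]
    · -- e same fiber, f crossing
      obtain ⟨z0, hz0, hz0u⟩ := existsUnique_prod (fiber_star_eu hde hxy) (lift_star_eu hdf)
      refine ⟨Sum.inr (Sum.inl z0), ⟨?_, ?_⟩, ?_⟩
      · simp only [hSA, hSB, Sum.elim_inr, Sum.elim_inl]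
        exact hz0.1
      · simp only [hSC, hSD, Sum.elim_inr, Sum.elim_inl]
        exact hz0.2
      · rintro (k' | (z | (z | z))) ⟨hj1, hj2⟩
        · simp only [hSA, hSB, Sum.elim_inl] at hj1
          exact absurd hde (shape_cc (p1 k') hj1)
        · simp only [hSA, hSB, hSC, hSD, Sum.elim_inr, Sum.elim_inl] at hj1 hj2
          exact congrArg (fun z => Sum.inr (Sum.inl z)) (hz0u z ⟨hj1, hj2⟩)
        · simp only [hSA, hSB, Sum.elim_inr, Sum.elim_inl] at hj1
          exact absurd hde (shape_lift hj1)
        · simp only [hSC, hSD, Sum.elim_inr] at hj2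
          exact absurd ((shape_image hj2).1.trans (shape_image hj2).2.symm) hdf
    · -- e crossing, f same fiber
      obtain ⟨z0, hz0, hz0u⟩ := existsUnique_prod (lift_star_eu hde) (fiber_star_eu hdf huw)
      refine ⟨Sum.inr (Sum.inr (Sum.inl z0)), ⟨?_, ?_⟩, ?_⟩
      · simp only [hSA, hSB, Sum.elim_inr, Sum.elim_inl]
        exact hz0.1
      · simp only [hSC, hSD, Sum.elim_inr, Sum.elim_inl]
        exact hz0.2
      · rintro (k' | (z | (z | z))) ⟨hj1, hj2⟩
        · simp only [hSC, hSD, Sum.elim_inl] at hj2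
          exact absurd hdf (shape_cc (p2 k') hj2)
        · simp only [hSC, hSD, Sum.elim_inr, Sum.elim_inl] at hj2
          exact absurd hdf (shape_lift hj2)
        · simp only [hSA, hSB, hSC, hSD, Sum.elim_inr, Sum.elim_inl] at hj1 hj2
          exact congrArg (fun z => Sum.inr (Sum.inr (Sum.inl z))) (hz0u z ⟨hj1, hj2⟩)
        · simp only [hSA, hSB, Sum.elim_inr] at hj1
          exact absurd ((shape_image hj1).1.trans (shape_image hj1).2.symm) hde
    · -- both crossing
      obtain ⟨k0, hk0, hk0u⟩ := p5 (s(fdiv x, fdiv y), s(fdiv u, fdiv w))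
        (by rw [SimpleGraph.mem_edgeSet]; exact hde)
        (by rw [SimpleGraph.mem_edgeSet]; exact hdf)
      refine ⟨Sum.inl k0, ⟨?_, ?_⟩, ?_⟩
      · simp only [hSA, hSB, Sum.elim_inl]
        exact (biclique_preimage fdiv _ _ x y).mpr hk0.1
      · simp only [hSC, hSD, Sum.elim_inl]
        exact (biclique_preimage fdiv _ _ u w).mpr hk0.2
      · rintro (k' | (z | (z | z))) ⟨hj1, hj2⟩
        · simp only [hSA, hSB, hSC, hSD, Sum.elim_inl] at hj1 hj2
          exact congrArg Sum.inl (hk0u k'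
            ⟨(biclique_preimage fdiv _ _ x y).mp hj1, (biclique_preimage fdiv _ _ u w).mp hj2⟩)
        · simp only [hSA, hSB, Sum.elim_inr, Sum.elim_inl] at hj1
          exact absurd (shape_single (fun v hv => hv.1) hj1) hde
        · simp only [hSC, hSD, Sum.elim_inr, Sum.elim_inl] at hj2
          exact absurd (shape_single (fun v hv => hv.1) hj2) hdf
        · simp only [hSA, hSB, Sum.elim_inr] at hj1
          exact absurd ((shape_image hj1).1.trans (shape_image hj1).2.symm) hde
  have hmem := mem_gset_card _ _ I SA SB SC SD hAB hCD
    (fun k => biclique_subset_top (hAB k)) (fun k => biclique_subset_top (hCD k)) h5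
  have hcard : Fintype.card I =
      gg a b + a * (s - 1) * (b - 1) + (a - 1) * (b * (t - 1)) + a * b * gg s t := by
    simp [hI]
    ring
  calc gg (a * s) (b * t) ≤ Fintype.card I := gg_le_of_mem hmem
    _ = _ := hcard

end Stmt6

namespace Stmt6

lemma power_bound {A : ℕ} (hA : 4 ≤ A) (hgA : (gg A A : ℝ) ≤ (A : ℝ) ^ 2 - 3 * A) :
    ∀ k : ℕ, (gg (A ^ k) (A ^ k) : ℝ) ≤
      (1 - 1 / ((A : ℝ) ^ 2 - 1)) * ((A : ℝ) ^ k) ^ 2 - 2 * (A : ℝ) ^ k +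
        (1 + 1 / ((A : ℝ) ^ 2 - 1)) := by
  have hA1 : (4 : ℝ) ≤ (A : ℝ) := by exact_mod_cast hA
  have hA2 : ((A : ℝ) ^ 2 - 1) ≠ 0 := by nlinarith
  set c : ℝ := 1 / ((A : ℝ) ^ 2 - 1) with hc_def
  have hc : c * ((A : ℝ) ^ 2 - 1) = 1 := by
    rw [hc_def]; field_simp
  intro k
  induction k with
  | zero =>
    have h0 : gg (A ^ 0) (A ^ 0) = 0 := by
      have := gg_le_trivial (A ^ 0) (A ^ 0)
      simpa using this
    rw [h0]
    simp only [pow_zero, Nat.cast_zero]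
    linarith
  | succ k ih =>
    have hAk1 : 1 ≤ A ^ k := Nat.one_le_pow _ _ (by omega)
    have hA1n : 1 ≤ A := by omega
    have hm := master A A (A ^ k) (A ^ k)
    rw [show A * A ^ k = A ^ (k + 1) from (pow_succ' A k).symm] at hm
    have hm' := (Nat.cast_le (α := ℝ)).mpr hm
    push_cast [Nat.cast_sub hAk1, Nat.cast_sub hA1n] at hm'
    have hX : (1 : ℝ) ≤ (A : ℝ) ^ k := by exact_mod_cast hAk1
    have hGnn : (0 : ℝ) ≤ (A : ℝ) * (A : ℝ) := by positivity
    have ihm := mul_le_mul_of_nonneg_left ih hGnn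
    rw [pow_succ (A : ℝ) k]
    linarith [hm', ihm, hgA, hc, hX, hA1]

end Stmt6

namespace Stmt6

lemma power_bound' {A : ℕ} (hA : 4 ≤ A) (hgA : (gg A A : ℝ) ≤ (A : ℝ) ^ 2 - 3 * A) (k : ℕ) :
    (gg (A ^ k) (A ^ k) : ℝ) ≤ (1 - 1 / ((A : ℝ) ^ 2 - 1)) * ((A : ℝ) ^ k) ^ 2 := by
  have h := power_bound hA hgA k
  have hA1 : (4 : ℝ) ≤ (A : ℝ) := by exact_mod_cast hA
  have hden : (0 : ℝ) < (A : ℝ) ^ 2 - 1 := by nlinarith only [hA1, sq_nonneg ((A : ℝ) - 4)]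
  have hc1 : 1 / ((A : ℝ) ^ 2 - 1) ≤ 1 := by
    rw [div_le_one hden]
    nlinarith only [hA1, sq_nonneg ((A : ℝ) - 4)]
  have hX : (1 : ℝ) ≤ (A : ℝ) ^ k := by
    have : 1 ≤ A ^ k := Nat.one_le_pow _ _ (by omega)
    exact_mod_cast this
  linarith

end Stmt6

set_option maxHeartbeats 1000000 in
open Stmt6 in
theorem stmt6' (a b : ℕ)
    (h : gGH (SimpleGraph.completeGraph (Fin a)) (SimpleGraph.completeGraph (Fin b)) < (a - 1) * (b - 1)) :
    ∃ β : ℝ, β < 1 ∧ ∀ n : ℕ, (gg n n : ℝ) ≤ β * n ^ 2 := by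
  have h' : gg a b < (a - 1) * (b - 1) := h
  have ha : 2 ≤ a := by
    by_contra hc
    have hz : a - 1 = 0 := by omega
    rw [hz, Nat.zero_mul] at h'
    omega
  have hb : 2 ≤ b := by
    by_contra hc
    have hz : b - 1 = 0 := by omega
    rw [hz, Nat.mul_zero] at h'
    omega
  set A := a * b with hAdef
  have hA4 : 4 ≤ A := by
    calc 4 = 2 * 2 := rfl
      _ ≤ a * b := Nat.mul_le_mul ha hb
  have hA0 : 0 < A := by omega
  have hboot : gg A A ≤ gg a b + a * (b - 1) * (b - 1) + (a - 1) * (b * (a - 1)) +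
      a * b * gg b a := by
    have hm := master a b b a
    rwa [Nat.mul_comm b a] at hm
  have hswap := gg_swap_le a b
  have ha1 : (1 : ℕ) ≤ a := by omega
  have hb1 : (1 : ℕ) ≤ b := by omega
  have hAr4 : (4 : ℝ) ≤ (A : ℝ) := by exact_mod_cast hA4
  have hAr0 : (0 : ℝ) ≤ (A : ℝ) := by positivity
  have mA_real : (gg A A : ℝ) ≤ (A : ℝ) ^ 2 - 3 * A := by
    have h1 := (Nat.cast_le (α := ℝ)).mpr hboot
    have h2 := (Nat.cast_le (α := ℝ)).mpr hswap
    have h3 : ((gg a b : ℕ) : ℝ) + 1 ≤ ((a : ℝ) - 1) * ((b : ℝ) - 1) := by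
      have := (Nat.cast_le (α := ℝ)).mpr (Nat.succ_le_of_lt h')
      push_cast [Nat.cast_sub ha1, Nat.cast_sub hb1] at this
      linarith
    push_cast [Nat.cast_sub ha1, Nat.cast_sub hb1] at h1
    have hAr : (A : ℝ) = (a : ℝ) * (b : ℝ) := by rw [hAdef]; push_cast; ring
    rw [hAr]
    have hab : (0 : ℝ) ≤ 1 + (a : ℝ) * b := by positivity
    have hab2 : (0 : ℝ) ≤ (a : ℝ) * b := by positivity
    linarith only [mul_le_mul_of_nonneg_left h3 hab, mul_le_mul_of_nonneg_left h2 hab2, h1]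
  have hden : (0 : ℝ) < (A : ℝ) ^ 2 - 1 := by nlinarith only [hAr4, sq_nonneg ((A : ℝ) - 4)]
  set c : ℝ := 1 / ((A : ℝ) ^ 2 - 1) with hc_def
  have hc_pos : 0 < c := by rw [hc_def]; positivity
  have hc1 : c ≤ 1 := by
    rw [hc_def, div_le_one hden]
    nlinarith only [hAr4, sq_nonneg ((A : ℝ) - 4)]
  have hcT : c * ((A : ℝ) ^ 2 - 1) = 1 := by rw [hc_def]; field_simp
  have hA2_1 : 1 ≤ A ^ 2 := Nat.one_le_pow _ _ hA0
  set T : ℕ := 4 * (A ^ 2 - 1) with hT_def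
  have hT_pos : 0 < T := by
    have h16 : 16 ≤ A * A := Nat.mul_le_mul hA4 hA4
    have : 16 ≤ A ^ 2 := by rwa [pow_two]
    omega
  have hTr : (T : ℝ) = 4 * ((A : ℝ) ^ 2 - 1) := by
    rw [hT_def]
    push_cast [Nat.cast_sub hA2_1]
    ring
  have hTr1 : (1 : ℝ) ≤ (T : ℝ) := by
    rw [hTr]; nlinarith only [hAr4, sq_nonneg ((A : ℝ) - 4)]
  set n0 : ℕ := 256 * A ^ 8 with hn0_def
  have hn0_pos : 0 < n0 := by
    have : 0 < A ^ 8 := Nat.pow_pos hA0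
    omega
  have hn0r : (0 : ℝ) < (n0 : ℝ) := by exact_mod_cast hn0_pos
  have hr_n0 : (n0 : ℝ) = 256 * (A : ℝ) ^ 8 := by rw [hn0_def]; push_cast; ring
  have hcA : 1 ≤ c * (A : ℝ) ^ 2 := by linarith only [hcT, hc_pos]
  -- main estimate for large n
  have big : ∀ n : ℕ, n0 ≤ n → (gg n n : ℝ) ≤ (1 - c / 32) * (n : ℝ) ^ 2 := by
    intro n hn
    have hA2 : 1 < A := by omega
    have hTn0 : T ≤ n0 := by
      have hpow : A ^ 2 ≤ A ^ 8 := Nat.pow_le_pow_right (by omega) (by omega)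
      omega
    have hnT_pos : 0 < n / T := Nat.div_pos (le_trans hTn0 hn) hT_pos
    set k := Nat.log A (n / T) with hk_def
    have hk1 : A ^ k ≤ n / T := Nat.pow_log_le_self A (by omega)
    have hTAk : T * A ^ k ≤ n := by
      calc T * A ^ k ≤ T * (n / T) := Nat.mul_le_mul_left T hk1
        _ ≤ n := Nat.mul_div_le n T
    have hk2 : n / T < A ^ (k + 1) := Nat.lt_pow_succ_log_self hA2 _
    have hnT : n < T * A ^ (k + 1) := by
      have hd := Nat.div_add_mod n T
      have hmod := Nat.mod_lt n hT_pos
      calc n < T * (n / T) + T := by omega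
        _ = T * (n / T + 1) := by ring
        _ ≤ T * A ^ (k + 1) := Nat.mul_le_mul_left T hk2
    have hAk_pos : 0 < A ^ k := Nat.pow_pos hA0
    set q := n / A ^ k + 1 with hq_def
    have hq1 : n ≤ q * A ^ k := by
      have hd := Nat.div_add_mod n (A ^ k)
      have hmod := Nat.mod_lt n hAk_pos
      calc n = A ^ k * (n / A ^ k) + n % A ^ k := hd.symm
        _ ≤ A ^ k * (n / A ^ k) + A ^ k := by omega
        _ = q * A ^ k := by rw [hq_def]; ring
    have hq2 : q ≤ T * A := by
      have hlt : n / A ^ k < T * A := by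
        rw [Nat.div_lt_iff_lt_mul hAk_pos]
        calc n < T * A ^ (k + 1) := hnT
          _ = T * A * A ^ k := by rw [pow_succ]; ring
      omega
    have hqAk : q * A ^ k ≤ n + A ^ k := by
      have hle := Nat.div_mul_le_self n (A ^ k)
      calc q * A ^ k = (n / A ^ k) * A ^ k + A ^ k := by rw [hq_def]; ring
        _ ≤ n + A ^ k := by omega
    have step1 : gg n n ≤ gg (q * A ^ k) (q * A ^ k) := gg_mono hq1 hq1
    have step2 := master q q (A ^ k) (A ^ k)
    have step3 := gg_le_trivial q q
    have step4 := power_bound' hA4 mA_real k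
    rw [← hc_def] at step4
    have hq_ge1 : 1 ≤ q := by rw [hq_def]; exact Nat.succ_le_succ (Nat.zero_le _)
    have hAk1 : 1 ≤ A ^ k := hAk_pos
    have hcast1 := (Nat.cast_le (α := ℝ)).mpr step1
    have hcast2 := (Nat.cast_le (α := ℝ)).mpr step2
    have hcast3 := (Nat.cast_le (α := ℝ)).mpr step3
    push_cast [Nat.cast_sub hq_ge1, Nat.cast_sub hAk1] at hcast2 hcast3
    have hr_q2 : (q : ℝ) ≤ (T : ℝ) * A := by exact_mod_cast hq2
    have hr_qAk : (q : ℝ) * (A : ℝ) ^ k ≤ (n : ℝ) + (A : ℝ) ^ k := by exact_mod_cast hqAk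
    have hr_TAk : (T : ℝ) * (A : ℝ) ^ k ≤ (n : ℝ) := by exact_mod_cast hTAk
    have hr_X1 : (1 : ℝ) ≤ (A : ℝ) ^ k := by exact_mod_cast hAk1
    have hr_Q1 : (1 : ℝ) ≤ (q : ℝ) := by exact_mod_cast hq_ge1
    have hr_n : (n0 : ℝ) ≤ (n : ℝ) := by exact_mod_cast hn
    have hN0 : (0 : ℝ) ≤ (n : ℝ) := by positivity
    have hN1 : (1 : ℝ) ≤ (n : ℝ) := by
      have : 1 ≤ n := by omega
      exact_mod_cast this
    set X : ℝ := (A : ℝ) ^ k with hX_def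
    set Q : ℝ := (q : ℝ) with hQ_def
    set N : ℝ := (n : ℝ) with hN_def
    have hq_cast : ((n / A ^ k : ℕ) : ℝ) + 1 = Q := by rw [hQ_def, hq_def]; push_cast; ring
    have hX0 : (0 : ℝ) ≤ X := by rw [hX_def]; positivity
    have hQ0 : (0 : ℝ) ≤ Q := by linarith
    -- X ≤ N
    have hXN : X ≤ N := by
      linarith only [hr_TAk, mul_nonneg (sub_nonneg.mpr hTr1) hX0]
    -- 4 X N ≤ c N^2
    have f3' : c * (T : ℝ) * (X * N) = 4 * (X * N) := by
      have hcT4 : c * (T : ℝ) = 4 := by rw [hTr]; linear_combination 4 * hcT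
      linear_combination (X * N) * hcT4
    have f6 : 4 * (X * N) ≤ c * N ^ 2 := by
      have hint := mul_le_mul_of_nonneg_left hr_TAk (mul_nonneg hc_pos.le hN0)
      linarith only [hint, f3']
    -- Q bounded
    have hTA3 : (T : ℝ) * A ≤ 4 * (A : ℝ) ^ 3 := by
      rw [hTr]; nlinarith only [hAr0]
    have hR : Q ≤ 4 * (A : ℝ) ^ 3 := by linarith only [hr_q2, hTA3]
    -- c N lower bound
    have hcN : 256 * (A : ℝ) ^ 6 ≤ c * N := by
      have s1 : c * (256 * (A : ℝ) ^ 8) ≤ c * N := by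
        apply mul_le_mul_of_nonneg_left _ hc_pos.le
        rw [← hr_n0]; exact hr_n
      have s2 : 256 * (A : ℝ) ^ 6 ≤ c * (256 * (A : ℝ) ^ 8) := by
        linarith only [mul_le_mul_of_nonneg_left hcA
          (by positivity : (0:ℝ) ≤ 256 * (A : ℝ) ^ 6)]
      linarith only [s1, s2]
    -- assemble polynomial bound
    have hu : Q * X ≤ N + X := hr_qAk
    have hu0 : (0 : ℝ) ≤ Q * X := mul_nonneg hQ0 hX0
    have hE2 : (Q * X) * (Q * X) ≤ (N + X) * (N + X) :=
      mul_le_mul hu hu hu0 (by linarith)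
    have key1 : ((Q - 1) * (Q - 1)) + (Q * (X - 1) * (Q - 1) + (Q - 1) * (Q * (X - 1))) +
        Q * Q * ((1 - c) * X ^ 2) ≤ Q * Q + 2 * (Q * (Q * X)) + (1 - c) * ((Q * X) * (Q * X)) := by
      have hQ2 : 1 ≤ Q * Q := by nlinarith only [hr_Q1]
      linarith only [hQ2, mul_nonneg hQ0 hX0]
    have key2 : Q * Q + 2 * (Q * (Q * X)) + (1 - c) * ((Q * X) * (Q * X)) ≤
        (4 * (A : ℝ) ^ 3) * (4 * (A : ℝ) ^ 3) + 2 * ((4 * (A : ℝ) ^ 3) * (N + X)) +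
          (1 - c) * ((N + X) * (N + X)) := by
      have p1 : Q * Q ≤ (4 * (A : ℝ) ^ 3) * (4 * (A : ℝ) ^ 3) :=
        mul_le_mul hR hR hQ0 (by positivity)
      have p2 : Q * (Q * X) ≤ (4 * (A : ℝ) ^ 3) * (N + X) :=
        mul_le_mul hR hu hu0 (by positivity)
      have p3 : (1 - c) * ((Q * X) * (Q * X)) ≤ (1 - c) * ((N + X) * (N + X)) :=
        mul_le_mul_of_nonneg_left hE2 (by linarith only [hc1])
      linarith only [p1, p2, p3]
    have key3 : (4 * (A : ℝ) ^ 3) * (4 * (A : ℝ) ^ 3) + 2 * ((4 * (A : ℝ) ^ 3) * (N + X)) +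
        (1 - c) * ((N + X) * (N + X)) ≤
        (1 - c) * N ^ 2 + (2 * (X * N) + X ^ 2) + 16 * (A : ℝ) ^ 3 * N + 16 * (A : ℝ) ^ 6 := by
      have hcn : (0 : ℝ) ≤ c * (2 * (X * N) + X ^ 2) := by positivity
      linarith only [hcn,
        mul_nonneg (by positivity : (0:ℝ) ≤ 8 * (A:ℝ)^3) (sub_nonneg.mpr hXN)]
    -- term bounds
    have t1 : 2 * (X * N) ≤ (c / 2) * N ^ 2 := by linarith only [f6]
    have t2 : X ^ 2 ≤ (c / 4) * N ^ 2 := by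
      have hXX : X * X ≤ X * N := mul_le_mul_of_nonneg_left hXN hX0
      nlinarith only [hXX, f6]
    have hA36 : (A : ℝ) ^ 3 ≤ (A : ℝ) ^ 6 :=
      pow_le_pow_right₀ (by linarith only [hAr4]) (by omega)
    have t3 : 16 * (A : ℝ) ^ 3 * N ≤ (c / 16) * N ^ 2 := by
      have hstep : 256 * (A : ℝ) ^ 3 ≤ c * N := by linarith only [hcN, hA36]
      linarith only [mul_le_mul_of_nonneg_right hstep hN0]
    have t4 : 16 * (A : ℝ) ^ 6 ≤ (c / 16) * N ^ 2 := by
      have hstep := mul_le_mul_of_nonneg_right hcN hN0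
      linarith only [hstep,
        mul_nonneg (by positivity : (0:ℝ) ≤ 256 * (A:ℝ)^6) (sub_nonneg.mpr hN1)]
    -- combine
    have hQQ : (0 : ℝ) ≤ Q * Q := mul_nonneg hQ0 hQ0
    have step4m := mul_le_mul_of_nonneg_left step4 hQQ
    linarith only [hcast1, hcast2, hcast3, step4m, key1, key2, key3, t1, t2, t3, t4,
      mul_nonneg hc_pos.le (sq_nonneg N)]
  -- conclusion
  set δ : ℝ := c / (32 * (n0 : ℝ)) with hδ_def
  have hδ0 : 0 < δ := by rw [hδ_def]; positivity
  refine ⟨1 - δ, by linarith, ?_⟩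
  intro n
  rcases Nat.lt_or_ge n n0 with hsmall | hbig'
  · rcases Nat.eq_zero_or_pos n with rfl | hn1
    · have hz : gg 0 0 = 0 := by
        have := gg_le_trivial 0 0
        simpa using this
      rw [hz]
      norm_num
    · have htriv := (Nat.cast_le (α := ℝ)).mpr (gg_le_trivial n n)
      push_cast [Nat.cast_sub hn1] at htriv
      have hnr : (1 : ℝ) ≤ (n : ℝ) := by exact_mod_cast hn1
      have hnn0 : (n : ℝ) ≤ (n0 : ℝ) := by exact_mod_cast (le_of_lt hsmall)
      have hδn0 : δ * (32 * (n0 : ℝ)) = c := by rw [hδ_def]; field_simp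
      have hp : δ * (n : ℝ) ^ 2 ≤ δ * ((n0 : ℝ) * (n : ℝ)) := by
        apply mul_le_mul_of_nonneg_left _ hδ0.le
        nlinarith only [mul_nonneg (sub_nonneg.mpr hnn0) (by linarith only [hnr] : (0:ℝ) ≤ (n:ℝ))]
      have hq : δ * ((n0 : ℝ) * (n : ℝ)) = (c / 32) * (n : ℝ) := by
        linear_combination ((n : ℝ) / 32) * hδn0
      have hcn : c * (n : ℝ) ≤ (n : ℝ) := by
        have := mul_le_mul_of_nonneg_right hc1 (by linarith only [hnr] : (0:ℝ) ≤ (n:ℝ))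
        linarith only [this]
      linarith only [htriv, hp, hq, hcn, hnr]
  · have hbig := big n hbig'
    have hn0r1 : (1 : ℝ) ≤ (n0 : ℝ) := by exact_mod_cast hn0_pos
    have hδle : δ ≤ c / 32 := by
      rw [hδ_def]
      rw [div_le_div_iff₀ (by positivity) (by norm_num)]
      nlinarith only [mul_nonneg hc_pos.le (sub_nonneg.mpr hn0r1)]
    linarith only [hbig, mul_nonneg (sub_nonneg.mpr hδle) (sq_nonneg (n : ℝ))]

theorem stmt6 (a b : ℕ)
    (h : gGH (SimpleGraph.completeGraph (Fin a)) (SimpleGraph.completeGraph (Fin b)) < (a - 1) * (b - 1)) :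
    ∃ β : ℝ, β < 1 ∧ ∀ n : ℕ, (gn n : ℝ) ≤ β * n ^ 2 := by
  obtain ⟨β, hβ, hall⟩ := stmt6' a b h
  exact ⟨β, hβ, fun n => hall n⟩
end

section
/- For n ≥ 2, g(K_3, K_n) ≤ 2(n-1). -/
open Finset

/-! Products of biclique partitions of `G` and `H` are block partitions of `E(G) × E(H)`, so
`g(G, H) ≤ f₂(G) f₂(H)`. Both `K₃` and `Kₙ` are partitioned into the `n - 1` stars
`{c} × {j | c < j}`, `c < n - 1`: the edge `xy` lies in the star of `min x y` only. -/

structure IsBicliquePartition {V ι : Type*} (G : SimpleGraph V) (A B : ι → Finset V) : Prop where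
  disjoint : ∀ k, Disjoint (A k) (B k)
  subset_edgeSet : ∀ k, bicliqueEdges (A k) (B k) ⊆ G.edgeSet
  existsUnique_mem : ∀ e ∈ G.edgeSet, ∃! k, e ∈ bicliqueEdges (A k) (B k)

theorem IsBicliquePartition.gGH_le_card_mul {V W ι κ : Type*} [Fintype ι] [Fintype κ]
    {G : SimpleGraph V} {H : SimpleGraph W} {A B : ι → Finset V} {C D : κ → Finset W}
    (hG : IsBicliquePartition G A B) (hH : IsBicliquePartition H C D) :
    gGH G H ≤ Fintype.card ι * Fintype.card κ := by
  let σ : Fin (Fintype.card ι * Fintype.card κ) ≃ ι × κ :=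
    finProdFinEquiv.symm.trans ((Fintype.equivFin ι).symm.prodCongr (Fintype.equivFin κ).symm)
  refine Nat.sInf_le ⟨fun k => A (σ k).1, fun k => B (σ k).1, fun k => C (σ k).2,
    fun k => D (σ k).2, fun k => hG.disjoint _, fun k => hH.disjoint _,
    fun k => hG.subset_edgeSet _, fun k => hH.subset_edgeSet _, ?_⟩
  rintro ⟨e, f⟩ he hf
  obtain ⟨i, hi, hi_unique⟩ := hG.existsUnique_mem e he
  obtain ⟨j, hj, hj_unique⟩ := hH.existsUnique_mem f hf
  refine ⟨σ.symm (i, j), by simpa using ⟨hi, hj⟩, fun k ⟨hk₁, hk₂⟩ => σ.eq_symm_apply.2 ?_⟩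
  exact Prod.ext (hi_unique _ hk₁) (hj_unique _ hk₂)

theorem mk_mem_bicliqueEdges {V : Type*} {A B : Finset V} {x y : V} :
    s(x, y) ∈ bicliqueEdges A B ↔ x ∈ A ∧ y ∈ B ∨ y ∈ A ∧ x ∈ B := by
  constructor
  · rintro ⟨a, ha, b, hb, h⟩
    rcases Sym2.eq_iff.1 h with ⟨rfl, rfl⟩ | ⟨rfl, rfl⟩
    exacts [Or.inl ⟨ha, hb⟩, Or.inr ⟨ha, hb⟩]
  · rintro (⟨hx, hy⟩ | ⟨hy, hx⟩)
    exacts [⟨x, hx, y, hy, rfl⟩, ⟨y, hy, x, hx, Sym2.eq_swap⟩]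

theorem bicliqueEdges_subset_edgeSet_completeGraph {V : Type*} {A B : Finset V}
    (h : Disjoint A B) : bicliqueEdges A B ⊆ (SimpleGraph.completeGraph V).edgeSet := by
  rintro e ⟨a, ha, b, hb, rfl⟩ (hab : a = b)
  exact Finset.disjoint_left.1 h ha (hab ▸ hb)

theorem mk_mem_bicliqueEdges_star {n : ℕ} {x y : Fin n} (hxy : x ≠ y) (c : Fin n) :
    s(x, y) ∈ bicliqueEdges {c} {j | c < j} ↔ c = min x y := by
  have := Fin.val_ne_of_ne hxy
  simp only [mk_mem_bicliqueEdges, Finset.mem_singleton, Finset.mem_filter, Finset.mem_univ,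
    true_and, Fin.ext_iff, Fin.lt_def, Fin.coe_min]
  omega

theorem isBicliquePartition_stars (n : ℕ) :
    IsBicliquePartition (SimpleGraph.completeGraph (Fin n))
      (fun c : Fin (n - 1) => {Fin.castLE (n.sub_le 1) c})
      (fun c => {j | Fin.castLE (n.sub_le 1) c < j}) where
  disjoint c := by simp
  subset_edgeSet c := bicliqueEdges_subset_edgeSet_completeGraph (by simp)
  existsUnique_mem e he := by
    induction e using Sym2.ind with | _ x y => ?_
    have hxy : x ≠ y := he
    have hmin : (min x y : ℕ) < n - 1 := by
      have := Fin.val_ne_of_ne hxy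
      omega
    refine ⟨⟨min x y, hmin⟩, (mk_mem_bicliqueEdges_star hxy _).2 (Fin.ext (by simp)),
      fun c hc => Fin.ext ?_⟩
    simpa [Fin.ext_iff] using (mk_mem_bicliqueEdges_star hxy _).1 hc

theorem stmt9_general (n : ℕ) :
    gGH (SimpleGraph.completeGraph (Fin 3)) (SimpleGraph.completeGraph (Fin n)) ≤ 2 * (n - 1) := by
  simpa using (isBicliquePartition_stars 3).gGH_le_card_mul (isBicliquePartition_stars n)

theorem stmt9 (n : ℕ) (hn : 2 ≤ n) :
    gGH (SimpleGraph.completeGraph (Fin 3)) (SimpleGraph.completeGraph (Fin n)) ≤ 2 * (n - 1) :=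
  stmt9_general n
end

section
/- Suppose G_0, G_1, G_2, G_3 are graphs whose edge sets partition E(K_n). Then for each i ∈ {1,2,3}, f_2(G_0 ∪ G_1) + f_2(G_0 ∪ G_2) + f_2(G_0 ∪ G_3) + f_2(G_i) ≥ n - 1. -/
open Finset

/-!
Weighted Graham–Pollak: let `m` bicliques `(A k, B k)` with weights `w k` cover every edge of
`K_n` with total weight `1`. For `x` with `∑ x = 0` and `∑_{A k} x = 0` for all `k`, the identity
`(∑ x)² - ∑ x² = 2 ∑ₖ w k (∑_{A k} x)(∑_{B k} x)` forces `∑ x² = 0`, so these `m + 1` linear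
forms have trivial common kernel and `n ≤ m + 1`.

Optimal biclique partitions of `G 0 ⊔ G 1`, `G 0 ⊔ G 2`, `G 0 ⊔ G 3` and `G i`, weighted `1`
except for `-1` on `G 0 ⊔ G i`, and `2` on `G i`, form such a decomposition: an edge of `G 0`
gets weight `1 + 1 - 1`, an edge of `G i` gets `-1 + 2`, an edge of the other two `G j` gets `1`.
-/

theorem mk_mem_bicliqueEdges_iff {V : Type*} {A B : Finset V} {u v : V} :
    s(u, v) ∈ bicliqueEdges A B ↔ u ∈ A ∧ v ∈ B ∨ v ∈ A ∧ u ∈ B := by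
  constructor
  · rintro ⟨a, ha, b, hb, h⟩
    rcases Sym2.eq_iff.mp h with ⟨rfl, rfl⟩ | ⟨rfl, rfl⟩
    exacts [Or.inl ⟨ha, hb⟩, Or.inr ⟨ha, hb⟩]
  · rintro (⟨hu, hv⟩ | ⟨hv, hu⟩)
    exacts [⟨u, hu, v, hv, rfl⟩, ⟨v, hv, u, hu, Sym2.eq_swap⟩]

theorem bicliqueEdges_singleton {V : Type*} (a b : V) : bicliqueEdges {a} {b} = {s(a, b)} := by
  ext e
  simp [bicliqueEdges]

section SumMulSum

variable {V K : Type*} [Fintype V] [DecidableEq V] [CommSemiring K]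

theorem sum_mul_sum_eq_sum_sum_ite (A B : Finset V) (x : V → K) :
    (∑ a ∈ A, x a) * (∑ b ∈ B, x b) = ∑ u, ∑ v, if u ∈ A ∧ v ∈ B then x u * x v else 0 := by
  simp only [Finset.sum_mul_sum, ite_and, Finset.sum_ite_irrel, Finset.sum_ite_mem,
    Finset.univ_inter, Finset.sum_const_zero]

open scoped Classical in
theorem two_mul_sum_mul_sum_of_disjoint {A B : Finset V} (hAB : Disjoint A B) (x : V → K) :
    2 * ((∑ a ∈ A, x a) * (∑ b ∈ B, x b)) =
      ∑ u, ∑ v, if s(u, v) ∈ bicliqueEdges A B then x u * x v else 0 := by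
  have hexcl : ∀ u v, ¬ ((u ∈ A ∧ v ∈ B) ∧ (v ∈ A ∧ u ∈ B)) := fun u v h =>
    Finset.disjoint_left.mp hAB h.1.1 h.2.2
  calc 2 * ((∑ a ∈ A, x a) * (∑ b ∈ B, x b))
      = (∑ u, ∑ v, if u ∈ A ∧ v ∈ B then x u * x v else 0) +
          ∑ u, ∑ v, if v ∈ A ∧ u ∈ B then x u * x v else 0 := by
        rw [two_mul]
        congr 1
        · exact sum_mul_sum_eq_sum_sum_ite A B x
        · rw [mul_comm, sum_mul_sum_eq_sum_sum_ite]
          exact Finset.sum_congr rfl fun u _ => Finset.sum_congr rfl fun v _ =>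
            if_congr and_comm rfl rfl
    _ = _ := by
        rw [← Finset.sum_add_distrib]
        refine Finset.sum_congr rfl fun u _ => ?_
        rw [← Finset.sum_add_distrib]
        refine Finset.sum_congr rfl fun v _ => ?_
        have := hexcl u v
        simp only [mk_mem_bicliqueEdges_iff]
        split_ifs <;> first | tauto | ring

end SumMulSum

open scoped Classical in
structure IsWeightedBicliqueDecomposition {V ι K : Type*} [Fintype ι] [AddCommMonoid K] [One K]
    (A B : ι → Finset V) (w : ι → K) : Prop where
  disjoint : ∀ k, Disjoint (A k) (B k)
  sum_weight : ∀ e : Sym2 V, ¬ e.IsDiag → ∑ k with e ∈ bicliqueEdges (A k) (B k), w k = 1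

namespace IsWeightedBicliqueDecomposition

variable {V ι K : Type*} [DecidableEq V] [Fintype ι] {A B : ι → Finset V} {w : ι → K}

open scoped Classical in
theorem sum_weight_mk [CommSemiring K] (hD : IsWeightedBicliqueDecomposition A B w) (u v : V) :
    ∑ k with s(u, v) ∈ bicliqueEdges (A k) (B k), w k = if u = v then 0 else 1 := by
  split_ifs with huv
  · subst huv
    refine Finset.sum_eq_zero fun k hk => absurd (Finset.mem_filter.mp hk).2 ?_
    rw [mk_mem_bicliqueEdges_iff, or_self]
    exact fun h => Finset.disjoint_left.mp (hD.disjoint k) h.1 h.2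
  · exact hD.sum_weight _ (Sym2.mk_isDiag_iff.not.mpr huv)

theorem sq_sum_sub_sum_sq [Fintype V] [CommRing K] (hD : IsWeightedBicliqueDecomposition A B w)
    (x : V → K) :
    (∑ u, x u) ^ 2 - ∑ u, x u ^ 2 = 2 * ∑ k, w k * ((∑ a ∈ A k, x a) * (∑ b ∈ B k, x b)) := by
  classical
  calc (∑ u, x u) ^ 2 - ∑ u, x u ^ 2
      = ∑ u, ∑ v, (if u = v then 0 else 1) * (x u * x v) := by
        rw [sq, Finset.sum_mul_sum, ← Finset.sum_sub_distrib]
        refine Finset.sum_congr rfl fun u _ => ?_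
        simp [ite_mul, sq, Finset.sum_ite, Finset.filter_ne, Finset.sum_erase_eq_sub]
    _ = ∑ u, ∑ v, ∑ k, w k * (if s(u, v) ∈ bicliqueEdges (A k) (B k) then x u * x v else 0) := by
        simp only [← hD.sum_weight_mk, Finset.sum_filter, Finset.sum_mul, ite_mul, zero_mul,
          mul_ite, mul_zero]
    _ = 2 * ∑ k, w k * ((∑ a ∈ A k, x a) * (∑ b ∈ B k, x b)) := by
        rw [Finset.mul_sum]
        simp_rw [mul_left_comm (2 : K) (w _), two_mul_sum_mul_sum_of_disjoint (hD.disjoint _),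
          Finset.mul_sum]
        conv_rhs => rw [Finset.sum_comm]
        exact Finset.sum_congr rfl fun u _ => Finset.sum_comm

theorem eq_zero_of_sum_eq_zero [Fintype V] [CommRing K] [LinearOrder K] [IsStrictOrderedRing K]
    (hD : IsWeightedBicliqueDecomposition A B w) {x : V → K} (hsum : ∑ u, x u = 0)
    (hA : ∀ k, ∑ a ∈ A k, x a = 0) : x = 0 := by
  have hsq : ∑ u, x u ^ 2 = 0 := by
    simpa [hsum, hA] using hD.sq_sum_sub_sum_sq x
  funext u
  have := (Finset.sum_eq_zero_iff_of_nonneg fun u _ => sq_nonneg (x u)).mp hsq u (Finset.mem_univ u)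
  exact pow_eq_zero_iff two_ne_zero |>.mp this

theorem card_sub_one_le [Fintype V] [Field K] [LinearOrder K] [IsStrictOrderedRing K]
    (hD : IsWeightedBicliqueDecomposition A B w) : Fintype.card V - 1 ≤ Fintype.card ι := by
  by_contra! hlt
  let φ : (V → K) →ₗ[K] Option ι → K :=
    LinearMap.pi fun j : Option ι => ∑ a ∈ j.elim Finset.univ A, LinearMap.proj a
  have hker : LinearMap.ker φ ≠ ⊥ := LinearMap.ker_ne_bot_of_finrank_lt (by simp; omega)
  obtain ⟨x, hx, hx0⟩ := (Submodule.ne_bot_iff _).mp hker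
  have hφ : ∀ j : Option ι, ∑ a ∈ j.elim Finset.univ A, x a = 0 := fun j => by
    simpa [φ] using congr_fun hx j
  exact hx0 (hD.eq_zero_of_sum_eq_zero (hφ none) fun k => hφ (some k))

end IsWeightedBicliqueDecomposition

structure IsBicliquePartition_s11 {V ι : Type*} (G : SimpleGraph V) (A B : ι → Finset V) : Prop where
  disjoint : ∀ k, Disjoint (A k) (B k)
  subset_edgeSet : ∀ k, bicliqueEdges (A k) (B k) ⊆ G.edgeSet
  existsUnique : ∀ e ∈ G.edgeSet, ∃! k, e ∈ bicliqueEdges (A k) (B k)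

theorem f2_eq_sInf {V : Type*} (G : SimpleGraph V) :
    f2 G = sInf {m | ∃ A B : Fin m → Finset V, IsBicliquePartition_s11 G A B} := by
  unfold f2
  congr 1
  ext m
  refine exists_congr fun A => exists_congr fun B => ?_
  exact ⟨fun ⟨h₁, h₂, h₃⟩ => ⟨h₁, h₂, h₃⟩, fun ⟨h₁, h₂, h₃⟩ => ⟨h₁, h₂, h₃⟩⟩

namespace IsBicliquePartition_s11

variable {V ι : Type*} {G : SimpleGraph V} {A B : ι → Finset V}

theorem comp_equiv {κ : Type*} (hP : IsBicliquePartition_s11 G A B) (σ : κ ≃ ι) :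
    IsBicliquePartition_s11 G (A ∘ σ) (B ∘ σ) where
  disjoint k := hP.disjoint (σ k)
  subset_edgeSet k := hP.subset_edgeSet (σ k)
  existsUnique e he := σ.existsUnique_congr_right.mpr (hP.existsUnique e he)

open scoped Classical in
theorem card_filter_mem [Fintype ι] (hP : IsBicliquePartition_s11 G A B) (e : Sym2 V) :
    #{k | e ∈ bicliqueEdges (A k) (B k)} = if e ∈ G.edgeSet then 1 else 0 := by
  split_ifs with he
  · obtain ⟨k, hk, huniq⟩ := hP.existsUnique e he
    refine Finset.card_eq_one.mpr ⟨k, Finset.eq_singleton_iff_unique_mem.mpr ⟨?_, fun l hl => ?_⟩⟩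
    exacts [Finset.mem_filter.mpr ⟨Finset.mem_univ k, hk⟩, huniq l (Finset.mem_filter.mp hl).2]
  · refine Finset.card_eq_zero.mpr (Finset.filter_eq_empty_iff.mpr fun k _ hk => ?_)
    exact he (hP.subset_edgeSet k hk)

end IsBicliquePartition_s11

theorem isBicliquePartition_edgeSet {V : Type*} (G : SimpleGraph V) :
    IsBicliquePartition_s11 G (fun e : G.edgeSet => {e.1.out.1}) (fun e => {e.1.out.2}) := by
  have hout : ∀ e : Sym2 V, s(e.out.1, e.out.2) = e := fun e => by rw [Sym2.mk, e.out_eq]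
  refine ⟨fun e => ?_, fun e => ?_, fun e he => ⟨⟨e, he⟩, ?_, fun e' he' => ?_⟩⟩
  · have hadj : G.Adj e.1.out.1 e.1.out.2 := by rw [← SimpleGraph.mem_edgeSet, hout]; exact e.2
    exact Finset.disjoint_singleton.mpr hadj.ne
  · rw [bicliqueEdges_singleton, Set.singleton_subset_iff, hout]
    exact e.2
  · simp [bicliqueEdges_singleton, hout]
  · simp only [bicliqueEdges_singleton, Set.mem_singleton_iff, hout] at he'
    exact Subtype.ext he'.symm

theorem exists_isBicliquePartition_f2 {V : Type*} [Finite V] (G : SimpleGraph V) :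
    ∃ A B : Fin (f2 G) → Finset V, IsBicliquePartition_s11 G A B := by
  have hne : {m | ∃ A B : Fin m → Finset V, IsBicliquePartition_s11 G A B}.Nonempty :=
    ⟨_, _, _, (isBicliquePartition_edgeSet G).comp_equiv (Finite.equivFin G.edgeSet).symm⟩
  rw [f2_eq_sInf]
  exact Nat.sInf_mem hne

open scoped Classical in
theorem isWeightedBicliqueDecomposition_sigma {V ι K : Type*} [Fintype ι]
    [CommSemiring K] {κ : ι → Type*} [∀ j, Fintype (κ j)] {H : ι → SimpleGraph V}
    {A B : (j : ι) → κ j → Finset V} (hP : ∀ j, IsBicliquePartition_s11 (H j) (A j) (B j)) {c : ι → K}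
    (hc : ∀ e : Sym2 V, ¬ e.IsDiag → ∑ j with e ∈ (H j).edgeSet, c j = 1) :
    IsWeightedBicliqueDecomposition (fun p : Σ j, κ j => A p.1 p.2) (fun p => B p.1 p.2)
      (fun p => c p.1) where
  disjoint p := (hP p.1).disjoint p.2
  sum_weight e he := by
    rw [← hc e he, Finset.sum_filter, Finset.sum_filter, Fintype.sum_sigma]
    refine Finset.sum_congr rfl fun j _ => ?_
    dsimp only
    rw [← Finset.sum_filter, Finset.sum_const, (hP j).card_filter_mem]
    split_ifs <;> simp

open scoped Classical in
theorem card_sub_one_le_sum_f2 {V ι K : Type*} [Fintype V] [Fintype ι] [Field K] [LinearOrder K]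
    [IsStrictOrderedRing K] (H : ι → SimpleGraph V) (c : ι → K)
    (hc : ∀ e : Sym2 V, ¬ e.IsDiag → ∑ j with e ∈ (H j).edgeSet, c j = 1) :
    Fintype.card V - 1 ≤ ∑ j, f2 (H j) := by
  choose A B hP using fun j => exists_isBicliquePartition_f2 (H j)
  simpa using (isWeightedBicliqueDecomposition_sigma hP hc).card_sub_one_le

theorem stmt11 (n : ℕ) (G : Fin 4 → SimpleGraph (Fin n))
    (hpart : ∀ e ∈ (SimpleGraph.completeGraph (Fin n)).edgeSet, ∃! t, e ∈ (G t).edgeSet)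
    (i : Fin 4) (hi : i ≠ 0) :
    n - 1 ≤ f2 (G 0 ⊔ G 1) + f2 (G 0 ⊔ G 2) + f2 (G 0 ⊔ G 3) + f2 (G i) := by
  classical
  let H : Fin 4 → SimpleGraph (Fin n) := ![G 0 ⊔ G 1, G 0 ⊔ G 2, G 0 ⊔ G 3, G i]
  let c : Fin 4 → ℚ :=
    ![if i = 1 then -1 else 1, if i = 2 then -1 else 1, if i = 3 then -1 else 1, 2]
  have hc : ∀ e : Sym2 (Fin n), ¬ e.IsDiag → ∑ j with e ∈ (H j).edgeSet, c j = 1 := by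
    intro e he
    obtain ⟨t, ht, huniq⟩ := hpart e (by simpa using he)
    have hmem : ∀ s, e ∈ (G s).edgeSet ↔ s = t := fun s => ⟨huniq s, fun h => h ▸ ht⟩
    obtain rfl | rfl | rfl : i = 1 ∨ i = 2 ∨ i = 3 := by omega
    all_goals
      obtain rfl | rfl | rfl | rfl : t = 0 ∨ t = 1 ∨ t = 2 ∨ t = 3 := by omega
      all_goals simp [Finset.sum_filter, Fin.sum_univ_four, H, c, hmem] <;> norm_num
  simpa [Fin.sum_univ_four, H] using card_sub_one_le_sum_f2 H c hc
end

section
/- For all n > 2k ≥ 2, f_{2k+2}(n) ≤ Σ_{m=2k}^{n-2} f_{2k}(m). -/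
open Finset

/-!
Order the vertices. An `(r + 2)`-set `e` can be written uniquely as `insert a (insert s e')`
with `a < s < e'`, so it is determined by its second smallest vertex `s`, a vertex `a` below `s`
and an `r`-set `e'` above `s`. For a fixed `s`, the `(r + 2)`-sets of this shape are therefore
partitioned by the complete `(r + 2)`-partite hypergraphs with parts `Iio s, {s}, Q₁, …, Q_r`,
where `(Q₁, …, Q_r)` runs over an optimal partition of the `r`-sets of the `#(Ioi s)` vertices
above `s`. Only the `s` with a vertex below and at least `r` vertices above contribute, and for
those `#(Ioi s)` ranges injectively over `[r, n - 2]`.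
-/

section CrossEdges

theorem pairwise_disjoint_cons {V : Type*} {r : ℕ} {A : Finset V} {P : Fin r → Finset V}
    (hA : ∀ t, Disjoint A (P t)) (hP : Pairwise (Function.onFun Disjoint P)) :
    Pairwise (Function.onFun Disjoint (Fin.cons A P : Fin (r + 1) → Finset V)) := by
  intro i j hij
  cases i using Fin.cases <;> cases j using Fin.cases
  · exact absurd rfl hij
  · exact hA _
  · exact (hA _).symm
  · exact hP (ne_of_apply_ne Fin.succ hij)

variable {V W : Type*} [DecidableEq V] {r : ℕ}

theorem image_univ_cons (a : V) (f : Fin r → V) :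
    image (Fin.cons a f : Fin (r + 1) → V) univ = insert a (image f univ) := by
  apply coe_injective
  simp [Fin.range_cons]

theorem mem_crossEdges_cons {A : Finset V} {P : Fin r → Finset V} {e : Finset V} :
    e ∈ crossEdges (Fin.cons A P : Fin (r + 1) → Finset V) ↔
      ∃ a ∈ A, ∃ e' ∈ crossEdges P, e = insert a e' := by
  constructor
  · rintro ⟨f, hf, rfl⟩
    refine ⟨f 0, hf 0, _, ⟨Fin.tail f, fun t => hf t.succ, rfl⟩, ?_⟩
    rw [← image_univ_cons, Fin.cons_self_tail]
  · rintro ⟨a, ha, _, ⟨f, hf, rfl⟩, rfl⟩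
    refine ⟨Fin.cons a f, Fin.cases ha hf, ?_⟩
    exact (image_univ_cons a f).symm

theorem mem_crossEdges_map [DecidableEq W] (g : W ↪ V) {Q : Fin r → Finset W}
    {e : Finset V} :
    e ∈ crossEdges (fun t => (Q t).map g) ↔ ∃ e' ∈ crossEdges Q, e = e'.map g := by
  constructor
  · rintro ⟨f, hf, rfl⟩
    choose f' hf' hgf' using fun t => mem_map.mp (hf t)
    refine ⟨_, ⟨f', hf', rfl⟩, ?_⟩
    rw [map_eq_image, image_image]
    exact congrArg (image · _) (funext fun t => (hgf' t).symm)
  · rintro ⟨_, ⟨f, hf, rfl⟩, rfl⟩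
    refine ⟨g ∘ f, fun t => mem_map_of_mem g (hf t), ?_⟩
    rw [map_eq_image, image_image]

theorem mem_crossEdges_singleton (f : Fin r → V) {e : Finset V} :
    e ∈ crossEdges (fun t => ({f t} : Finset V)) ↔ e = image f univ := by
  constructor
  · rintro ⟨f', hf', rfl⟩
    simp only [mem_singleton] at hf'
    rw [funext hf']
  · rintro rfl
    exact ⟨f, fun t => mem_singleton_self _, rfl⟩

end CrossEdges

section CrossPartition

variable {ι V : Type*} [DecidableEq V] {r : ℕ}

def IsCrossPartition (P : ι → Fin r → Finset V) : Prop :=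
  (∀ k, Pairwise (Function.onFun Disjoint (P k))) ∧
    ∀ e : Finset V, #e = r → ∃! k, e ∈ crossEdges (P k)

theorem IsCrossPartition.comp_equiv {κ : Type*} {P : ι → Fin r → Finset V}
    (hP : IsCrossPartition P) (σ : κ ≃ ι) : IsCrossPartition (P ∘ σ) :=
  ⟨fun k => hP.1 (σ k), fun e he => σ.existsUnique_congr_right.mpr (hP.2 e he)⟩

theorem isCrossPartition_sigma {κ : ι → Type*} {P : ∀ i, κ i → Fin r → Finset V}
    (hdisj : ∀ i k, Pairwise (Function.onFun Disjoint (P i k)))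
    (hcover : ∀ e : Finset V, #e = r → ∃ i, ∃! k, e ∈ crossEdges (P i k))
    (hsep : ∀ e i j k l, e ∈ crossEdges (P i k) → e ∈ crossEdges (P j l) → i = j) :
    IsCrossPartition (fun x : Σ i, κ i => P x.1 x.2) := by
  refine ⟨fun x => hdisj x.1 x.2, fun e he => ?_⟩
  obtain ⟨i, k, hk, hunique⟩ := hcover e he
  refine ⟨⟨i, k⟩, hk, fun ⟨j, l⟩ hl => ?_⟩
  obtain rfl := hsep e j i l k hl hk
  rw [hunique l hl]

end CrossPartition

theorem isCrossPartition_orderEmbOfFin {V : Type*} [LinearOrder V] {r : ℕ} :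
    IsCrossPartition fun (e : {e : Finset V // #e = r}) (t : Fin r) =>
      ({e.1.orderEmbOfFin e.2 t} : Finset V) := by
  refine ⟨fun e t t' htt' => ?_, fun e he => ⟨⟨e, he⟩, ?_, ?_⟩⟩
  · simpa [Function.onFun] using htt'
  · simp [mem_crossEdges_singleton]
  · rintro ⟨e', he'⟩ h
    simpa [mem_crossEdges_singleton, eq_comm] using h

theorem fr_le_card {ι : Type*} [Fintype ι] {r n : ℕ} {P : ι → Fin r → Finset (Fin n)}
    (hP : IsCrossPartition P) : fr r n ≤ Fintype.card ι :=
  Nat.sInf_le ⟨_, hP.comp_equiv (Fintype.equivFin ι).symm⟩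

theorem exists_isCrossPartition_fr (r n : ℕ) :
    ∃ P : Fin (fr r n) → Fin r → Finset (Fin n), IsCrossPartition P :=
  Nat.sInf_mem (s := {m | ∃ P : Fin m → Fin r → Finset (Fin n), IsCrossPartition P})
    ⟨_, _, isCrossPartition_orderEmbOfFin.comp_equiv (Fintype.equivFin _).symm⟩

section LinearOrder

variable {V : Type*} [LinearOrder V] {r : ℕ}

theorem exists_eq_insert_of_card_eq_succ {e : Finset V} (he : #e = r + 1) :
    ∃ a e', (∀ v ∈ e', a < v) ∧ #e' = r ∧ e = insert a e' := by
  have hne : e.Nonempty := card_pos.mp (by omega)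
  refine ⟨e.min' hne, e.erase (e.min' hne), fun v hv => min'_lt_of_mem_erase_min' _ _ hv, ?_,
    (insert_erase (min'_mem e hne)).symm⟩
  rw [card_erase_of_mem (min'_mem e hne), he, Nat.add_sub_cancel]

theorem eq_and_eq_of_insert_eq_insert {a a' : V} {e e' : Finset V} (ha : ∀ v ∈ e, a < v)
    (ha' : ∀ v ∈ e', a' < v) (h : insert a e = insert a' e') : a = a' ∧ e = e' := by
  have hmem : a ∈ insert a' e' := h ▸ mem_insert_self a e
  have hmem' : a' ∈ insert a e := h ▸ mem_insert_self a' e'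
  obtain rfl : a = a' := by
    rcases mem_insert.mp hmem with rfl | hmem
    · rfl
    rcases mem_insert.mp hmem' with rfl | hmem'
    · rfl
    exact absurd ((ha a' hmem').trans (ha' a hmem)) (lt_irrefl a)
  refine ⟨rfl, ?_⟩
  rw [← erase_insert fun h => lt_irrefl a (ha a h), h,
    erase_insert fun h => lt_irrefl a (ha' a h)]

theorem exists_eq_insert_insert_of_card_eq_add_two {e : Finset V} (he : #e = r + 2) :
    ∃ a s e', a < s ∧ (∀ v ∈ e', s < v) ∧ #e' = r ∧ e = insert a (insert s e') := by
  obtain ⟨a, e₁, ha, he₁, rfl⟩ := exists_eq_insert_of_card_eq_succ he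
  obtain ⟨s, e', hs, he', rfl⟩ := exists_eq_insert_of_card_eq_succ he₁
  exact ⟨a, s, e', ha s (mem_insert_self s e'), hs, he', rfl⟩

theorem eq_and_eq_of_insert_insert_eq_insert_insert {a s a' s' : V} {e e' : Finset V}
    (has : a < s) (hs : ∀ v ∈ e, s < v) (has' : a' < s') (hs' : ∀ v ∈ e', s' < v)
    (h : insert a (insert s e) = insert a' (insert s' e')) : s = s' ∧ e = e' := by
  have hbelow : ∀ {a s : V} {e : Finset V}, a < s → (∀ v ∈ e, s < v) →
      ∀ v ∈ insert s e, a < v :=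
    fun has hs => forall_mem_insert _ _ _ |>.mpr ⟨has, fun v hv => has.trans (hs v hv)⟩
  obtain ⟨-, h⟩ := eq_and_eq_of_insert_eq_insert (hbelow has hs) (hbelow has' hs') h
  exact eq_and_eq_of_insert_eq_insert hs hs' h

def IsSecondSmallest (s : V) (e : Finset V) : Prop :=
  ∃ a < s, ∃ e', (∀ v ∈ e', s < v) ∧ e = insert a (insert s e')

theorem IsSecondSmallest.eq {s s' : V} {e : Finset V} (h : IsSecondSmallest s e)
    (h' : IsSecondSmallest s' e) : s = s' := by
  obtain ⟨a, has, e₁, hs, rfl⟩ := h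
  obtain ⟨a', has', e₂, hs', he⟩ := h'
  exact (eq_and_eq_of_insert_insert_eq_insert_insert has hs has' hs' he).1

variable [LocallyFiniteOrderBot V]

def liftParts (s : V) (Q : Fin r → Finset V) : Fin (r + 2) → Finset V :=
  Fin.cons (Iio s) (Fin.cons {s} Q)

theorem mem_crossEdges_liftParts {s : V} {Q : Fin r → Finset V} {e : Finset V} :
    e ∈ crossEdges (liftParts s Q) ↔
      ∃ a < s, ∃ e' ∈ crossEdges Q, e = insert a (insert s e') := by
  simp only [liftParts, mem_crossEdges_cons, mem_Iio, mem_singleton]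
  constructor
  · rintro ⟨a, has, _, ⟨_, rfl, e', he', rfl⟩, rfl⟩
    exact ⟨a, has, e', he', rfl⟩
  · rintro ⟨a, has, e', he', rfl⟩
    exact ⟨a, has, _, ⟨s, rfl, e', he', rfl⟩, rfl⟩

theorem pairwise_disjoint_liftParts {s : V} {Q : Fin r → Finset V}
    (hQ : Pairwise (Function.onFun Disjoint Q)) (hQs : ∀ t, ∀ v ∈ Q t, s < v) :
    Pairwise (Function.onFun Disjoint (liftParts s Q)) := by
  refine pairwise_disjoint_cons (fun t => ?_) (pairwise_disjoint_cons (fun t => ?_) hQ)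
  · cases t using Fin.cases
    · simp
    · exact disjoint_left.mpr fun v hv hv' => lt_asymm (mem_Iio.mp hv) (hQs _ v hv')
  · exact disjoint_singleton_left.mpr fun h => lt_irrefl s (hQs t s h)

end LinearOrder

section Pivot

variable {V : Type*} [LinearOrder V] [LocallyFiniteOrderTop V] {r : ℕ} {s : V}

theorem lt_orderEmbOfFin_Ioi (w : Fin #(Ioi s)) : s < (Ioi s).orderEmbOfFin rfl w :=
  mem_Ioi.mp (orderEmbOfFin_mem _ _ w)

variable [LocallyFiniteOrderBot V]

def pivotParts (s : V) (Q : Fin r → Finset (Fin #(Ioi s))) : Fin (r + 2) → Finset V :=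
  liftParts s fun t => (Q t).map ((Ioi s).orderEmbOfFin rfl).toEmbedding

theorem mem_crossEdges_pivotParts {Q : Fin r → Finset (Fin #(Ioi s))} {e : Finset V} :
    e ∈ crossEdges (pivotParts s Q) ↔ ∃ a < s, ∃ e' ∈ crossEdges Q,
      e = insert a (insert s (e'.map ((Ioi s).orderEmbOfFin rfl).toEmbedding)) := by
  simp only [pivotParts, mem_crossEdges_liftParts, mem_crossEdges_map]
  constructor
  · rintro ⟨a, has, _, ⟨e', he', rfl⟩, rfl⟩
    exact ⟨a, has, e', he', rfl⟩
  · rintro ⟨a, has, e', he', rfl⟩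
    exact ⟨a, has, _, ⟨e', he', rfl⟩, rfl⟩

theorem pairwise_disjoint_pivotParts {Q : Fin r → Finset (Fin #(Ioi s))}
    (hQ : Pairwise (Function.onFun Disjoint Q)) :
    Pairwise (Function.onFun Disjoint (pivotParts s Q)) := by
  refine pairwise_disjoint_liftParts (fun t t' htt' => disjoint_map _ |>.mpr (hQ htt')) ?_
  intro t v hv
  obtain ⟨w, -, rfl⟩ := mem_map.mp hv
  exact lt_orderEmbOfFin_Ioi w

theorem isSecondSmallest_of_mem_crossEdges_pivotParts {Q : Fin r → Finset (Fin #(Ioi s))}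
    {e : Finset V} (he : e ∈ crossEdges (pivotParts s Q)) : IsSecondSmallest s e := by
  obtain ⟨a, has, e', -, rfl⟩ := mem_crossEdges_pivotParts.mp he
  refine ⟨a, has, _, fun v hv => ?_, rfl⟩
  obtain ⟨w, -, rfl⟩ := mem_map.mp hv
  exact lt_orderEmbOfFin_Ioi w

theorem insert_insert_map_mem_crossEdges_pivotParts_iff {Q : Fin r → Finset (Fin #(Ioi s))}
    {a : V} (has : a < s) {e : Finset (Fin #(Ioi s))} :
    insert a (insert s (e.map ((Ioi s).orderEmbOfFin rfl).toEmbedding)) ∈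
      crossEdges (pivotParts s Q) ↔ e ∈ crossEdges Q := by
  have habove : ∀ e : Finset (Fin #(Ioi s)),
      ∀ v ∈ e.map ((Ioi s).orderEmbOfFin rfl).toEmbedding, s < v := fun e v hv => by
    obtain ⟨w, -, rfl⟩ := mem_map.mp hv
    exact lt_orderEmbOfFin_Ioi w
  refine mem_crossEdges_pivotParts.trans ⟨?_, fun he => ⟨a, has, e, he, rfl⟩⟩
  rintro ⟨a', has', e', he', heq⟩
  obtain ⟨-, hmap⟩ :=
    eq_and_eq_of_insert_insert_eq_insert_insert has (habove e) has' (habove e') heq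
  rwa [map_inj.mp hmap]

theorem existsUnique_mem_crossEdges_pivotParts {κ : Type*}
    {Q : κ → Fin r → Finset (Fin #(Ioi s))} (hQ : IsCrossPartition Q) {a : V} (has : a < s)
    {e : Finset V} (hs : ∀ v ∈ e, s < v) (he : #e = r) :
    ∃! k, insert a (insert s e) ∈ crossEdges (pivotParts s (Q k)) := by
  have hsub : e ⊆ univ.map ((Ioi s).orderEmbOfFin rfl).toEmbedding := by
    rw [map_orderEmbOfFin_univ]
    exact fun v hv => mem_Ioi.mpr (hs v hv)
  obtain ⟨e', -, rfl⟩ := subset_map_iff.mp hsub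
  simp only [insert_insert_map_mem_crossEdges_pivotParts_iff has]
  exact hQ.2 e' (by rwa [card_map] at he)

theorem isCrossPartition_sigma_pivotParts {κ : ℕ → Type*}
    {Q : ∀ m, κ m → Fin r → Finset (Fin m)} (hQ : ∀ m, IsCrossPartition (Q m))
    (S : Finset V) (hS : ∀ a s, a < s → r ≤ #(Ioi s) → s ∈ S) :
    IsCrossPartition fun x : Σ s : S, κ #(Ioi s.1) => pivotParts x.1.1 (Q _ x.2) := by
  refine isCrossPartition_sigma (κ := fun s : S => κ #(Ioi s.1))
    (P := fun s k => pivotParts s.1 (Q _ k))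
    (fun s k => pairwise_disjoint_pivotParts ((hQ _).1 k))
    (fun e he => ?_) fun e s s' k k' he he' => Subtype.ext ?_
  · obtain ⟨a, s, e', has, hs, he', rfl⟩ := exists_eq_insert_insert_of_card_eq_add_two he
    have hsS : s ∈ S := hS a s has (he' ▸ card_le_card fun v hv => mem_Ioi.mpr (hs v hv))
    exact ⟨⟨s, hsS⟩, existsUnique_mem_crossEdges_pivotParts (hQ _) has hs he'⟩
  · exact (isSecondSmallest_of_mem_crossEdges_pivotParts he).eq
      (isSecondSmallest_of_mem_crossEdges_pivotParts he')

end Pivot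

theorem sum_card_Ioi_le_sum_Icc {M : Type*} [AddCommMonoid M] [Preorder M]
    [CanonicallyOrderedAdd M] (f : ℕ → M) (r n : ℕ) :
    ∑ s ∈ univ.filter (fun s : Fin n => 0 < (s : ℕ) ∧ r ≤ #(Ioi s)), f #(Ioi s) ≤
      ∑ m ∈ Icc r (n - 2), f m := by
  rw [← sum_image (g := fun s : Fin n => #(Ioi s)) fun s _ s' _ h => by
    simp only [Fin.card_Ioi] at h
    omega]
  refine sum_le_sum_of_subset fun m hm => ?_
  simp only [mem_image, mem_filter, mem_univ, true_and, Fin.card_Ioi] at hm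
  obtain ⟨s, ⟨hs, hr⟩, rfl⟩ := hm
  exact mem_Icc.mpr ⟨hr, by omega⟩

theorem fr_add_two_le_sum (r n : ℕ) : fr (r + 2) n ≤ ∑ m ∈ Icc r (n - 2), fr r m := by
  choose Q hQ using exists_isCrossPartition_fr r
  set S := univ.filter fun s : Fin n => 0 < (s : ℕ) ∧ r ≤ #(Ioi s)
  have hpartition := isCrossPartition_sigma_pivotParts hQ S fun a s has hr =>
    mem_filter.mpr ⟨mem_univ s, Nat.zero_lt_of_lt (Fin.lt_def.mp has), hr⟩
  calc fr (r + 2) n ≤ ∑ s ∈ S, fr r #(Ioi s) := by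
        refine (fr_le_card hpartition).trans_eq ?_
        simp only [Fintype.card_sigma, Fintype.card_fin]
        exact sum_coe_sort S fun s => fr r #(Ioi s)
    _ ≤ ∑ m ∈ Icc r (n - 2), fr r m := sum_card_Ioi_le_sum_Icc (fr r) r n

theorem stmt19_general (k n : ℕ) :
    fr (2 * k + 2) n ≤ ∑ m ∈ Finset.Icc (2 * k) (n - 2), fr (2 * k) m :=
  fr_add_two_le_sum (2 * k) n

theorem stmt19 (k n : ℕ) (hk : 1 ≤ k) (hn : 2 * k < n) :
    fr (2 * k + 2) n ≤ ∑ m ∈ Finset.Icc (2 * k) (n - 2), fr (2 * k) m :=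
  stmt19_general k n
end
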